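/- arXiv:1307.6018 — 6 statements merged into one kernel-verified Lean document; each statement's English description precedes it below -/
import Mathlib

section
/- Rearrangement preserves differential (Shannon) entropy: for a probability density f on R^n, if one of h(f) = −∫ f log f dx and h(f*) is well defined, then so is the other and h(f) = h(f*). -/
open MeasureTheory Set Filter ENNReal

noncomputable section

/-- The spherically symmetric (decreasing) rearrangement of a set `A ⊆ ℝⁿ`:
the centered open ball with the same Lebesgue measure as `A`
(empty if `A` is null, all of `ℝⁿ` if `A` has infinite measure). -/
def ballRearrange (n : ℕ) (A : Set (EuclideanSpace ℝ (Fin n))) :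
    Set (EuclideanSpace ℝ (Fin n)) :=
  {x | volume (Metric.ball (0 : EuclideanSpace ℝ (Fin n)) ‖x‖) < volume A}

/-- The spherically symmetric decreasing rearrangement of a function:
`f*(y) = ∫₀^∞ 1{y ∈ {x : f x > t}*} dt`. -/
def symmRearr (n : ℕ) (f : EuclideanSpace ℝ (Fin n) → ℝ≥0∞) :
    EuclideanSpace ℝ (Fin n) → ℝ≥0∞ :=
  fun y => ∫⁻ t in Ioi (0 : ℝ), (ballRearrange n {x | ENNReal.ofReal t < f x}).indicator 1 y

/-- `f` is a probability density on `ℝⁿ`. -/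
def IsDensity (n : ℕ) (f : EuclideanSpace ℝ (Fin n) → ℝ≥0∞) : Prop :=
  Measurable f ∧ ∫⁻ x, f x = 1

/-- Integral of the positive part of `-f log f`. -/
def entPos (n : ℕ) (f : EuclideanSpace ℝ (Fin n) → ℝ≥0∞) : ℝ≥0∞ :=
  ∫⁻ x, ENNReal.ofReal (-((f x).toReal * Real.log (f x).toReal))

/-- Integral of the negative part of `-f log f`. -/
def entNeg (n : ℕ) (f : EuclideanSpace ℝ (Fin n) → ℝ≥0∞) : ℝ≥0∞ :=
  ∫⁻ x, ENNReal.ofReal ((f x).toReal * Real.log (f x).toReal)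

/-- The Shannon differential entropy `h(f) = -∫ f log f` is well defined. -/
def EntDefined (n : ℕ) (f : EuclideanSpace ℝ (Fin n) → ℝ≥0∞) : Prop :=
  entPos n f ≠ ⊤ ∨ entNeg n f ≠ ⊤

/-- The Shannon differential entropy as an extended real number. -/
def entropy (n : ℕ) (f : EuclideanSpace ℝ (Fin n) → ℝ≥0∞) : EReal :=
  (entPos n f : EReal) - (entNeg n f : EReal)

/-- The Rényi entropy of order `p ∈ (0,1) ∪ (1,∞)`:
`h_p(f) = (1/(1-p)) log ∫ f^p`. -/
def renyi (n : ℕ) (f : EuclideanSpace ℝ (Fin n) → ℝ≥0∞) (p : ℝ) : EReal :=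
  (((1 - p)⁻¹ : ℝ) : EReal) * ENNReal.log (∫⁻ x, f x ^ p)

/-- Convolution of two `ℝ≥0∞`-valued functions on `ℝⁿ`. -/
def conv2 (n : ℕ) (f g : EuclideanSpace ℝ (Fin n) → ℝ≥0∞) :
    EuclideanSpace ℝ (Fin n) → ℝ≥0∞ :=
  fun x => ∫⁻ y, f y * g (x - y)

/-- Iterated convolution of a (nonempty) list of functions. -/
def convList (n : ℕ) : List (EuclideanSpace ℝ (Fin n) → ℝ≥0∞) →
    (EuclideanSpace ℝ (Fin n) → ℝ≥0∞)
  | [] => fun _ => 0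
  | [f] => f
  | f :: g :: rest => conv2 n f (convList n (g :: rest))

/-- `f ≺ g`: `f` is majorized by `g`. -/
def Majorizes (n : ℕ) (f g : EuclideanSpace ℝ (Fin n) → ℝ≥0∞) : Prop :=
  ∀ r : ℝ, 0 < r →
    ∫⁻ x in Metric.ball (0 : EuclideanSpace ℝ (Fin n)) r, symmRearr n f x ≤
      ∫⁻ x in Metric.ball (0 : EuclideanSpace ℝ (Fin n)) r, symmRearr n g x

/-! Unwinding the layer-cake formula defining `f*` shows that each superlevel set `{f* > c}` is
exactly the centered ball with the volume of `{f > c}`. For `c > 0` that volume is finite by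
Markov's inequality, so `f` and `f*` have superlevel sets of equal finite measure. Such functions
push Lebesgue measure forward to the same measure on `(0, ∞]`, because finite measures on `ℝ≥0∞`
are determined by their values on the rays `Ioi c`. Hence `∫ F ∘ f = ∫ F ∘ f*` for every
measurable `F` with `F 0 = 0`; apply this to the positive and negative parts of `-u log u`. -/

open scoped Topology

lemma antitone_measure_setOf_ofReal_lt {α : Type*} [MeasurableSpace α] (μ : Measure α)
    (f : α → ℝ≥0∞) : Antitone fun t : ℝ => μ {x | ENNReal.ofReal t < f x} :=
  fun _ _ hst => measure_mono fun _ hx => (ENNReal.ofReal_le_ofReal hst).trans_lt hx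

lemma exists_lt_measure_setOf_ofReal_lt_iff {α : Type*} [MeasurableSpace α] (μ : Measure α)
    (f : α → ℝ≥0∞) (a : ℝ≥0∞) (t : ℝ) :
    (∃ s, t < s ∧ a < μ {x | ENNReal.ofReal s < f x}) ↔ a < μ {x | ENNReal.ofReal t < f x} := by
  refine ⟨fun ⟨s, hts, ha⟩ => ha.trans_le (antitone_measure_setOf_ofReal_lt μ f hts.le),
    fun ha => ?_⟩
  have hmono : Monotone fun k : ℕ => {x | ENNReal.ofReal (t + 1 / (k + 1)) < f x} :=
    fun _ _ hij _ hx => (ENNReal.ofReal_le_ofReal (by gcongr)).trans_lt hx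
  have hunion : {x | ENNReal.ofReal t < f x} =
      ⋃ k : ℕ, {x | ENNReal.ofReal (t + 1 / (k + 1)) < f x} := by
    ext x
    simp only [mem_ofPred_eq, mem_iUnion]
    refine ⟨fun hx => ?_, fun ⟨_, hk⟩ =>
      (ENNReal.ofReal_le_ofReal (le_add_of_nonneg_right (by positivity))).trans_lt hk⟩
    have htend : Tendsto (fun k : ℕ => ENNReal.ofReal (t + 1 / (k + 1))) atTop
        (𝓝 (ENNReal.ofReal t)) := by
      refine (ENNReal.continuous_ofReal.tendsto t).comp ?_
      simpa using tendsto_const_nhds.add (tendsto_one_div_add_atTop_nhds_zero_nat (𝕜 := ℝ))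
    exact (htend.eventually_lt_const hx).exists
  rw [hunion, hmono.measure_iUnion, lt_iSup_iff] at ha
  obtain ⟨k, hk⟩ := ha
  exact ⟨t + 1 / (k + 1), lt_add_of_pos_right t Nat.one_div_pos_of_nat, hk⟩

lemma ofReal_lt_volume_inter_Ioi_iff {S : Set ℝ} (hS : IsLowerSet S) {t : ℝ} (ht : 0 ≤ t) :
    ENNReal.ofReal t < volume (S ∩ Ioi 0) ↔ ∃ s, t < s ∧ s ∈ S := by
  constructor
  · intro hlt
    by_contra! hS'
    have hsub : S ∩ Ioi 0 ⊆ Ioc 0 t := fun s ⟨hs, hs0⟩ => ⟨hs0, not_lt.1 fun h => hS' s h hs⟩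
    have := hlt.trans_le (measure_mono hsub)
    rw [Real.volume_Ioc, sub_zero] at this
    exact this.false
  · rintro ⟨s, hts, hs⟩
    have hsub : Ioc 0 s ⊆ S ∩ Ioi 0 := fun r ⟨hr0, hrs⟩ => ⟨hS hrs hs, hr0⟩
    calc ENNReal.ofReal t < ENNReal.ofReal s := (ENNReal.ofReal_lt_ofReal_iff (by linarith)).2 hts
      _ = volume (Ioc 0 s) := by rw [Real.volume_Ioc, sub_zero]
      _ ≤ volume (S ∩ Ioi 0) := measure_mono hsub

section Equimeasurable

variable {α β : Type*} [MeasurableSpace α] [MeasurableSpace β] {μ : Measure α} {ν : Measure β}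
  {f : α → ℝ≥0∞} {g : β → ℝ≥0∞}

lemma measure_setOf_lt_ne_top_of_lintegral_ne_top (hf : AEMeasurable f μ)
    (hfi : ∫⁻ x, f x ∂μ ≠ ∞) {c : ℝ≥0∞} (hc : c ≠ 0) : μ {x | c < f x} ≠ ∞ := by
  rcases eq_or_ne c ∞ with rfl | hc'
  · simp
  refine ne_top_of_le_ne_top (ENNReal.div_ne_top hfi hc) ?_
  exact (measure_mono fun x (hx : c < f x) => hx.le).trans (meas_ge_le_lintegral_div hf hc hc')

lemma map_restrict_Ioi_apply_Ioi (hf : Measurable f) (ε c : ℝ≥0∞) :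
    (μ.map f).restrict (Ioi ε) (Ioi c) = μ {x | max c ε < f x} := by
  rw [Measure.restrict_apply measurableSet_Ioi, Ioi_inter_Ioi,
    Measure.map_apply hf measurableSet_Ioi]
  rfl

lemma map_restrict_Ioi_zero_eq_of_measure_setOf_lt_eq (hf : Measurable f) (hg : Measurable g)
    (hfin : ∀ c, 0 < c → μ {x | c < f x} ≠ ∞)
    (heq : ∀ c, 0 < c → μ {x | c < f x} = ν {y | c < g y}) :
    (μ.map f).restrict (Ioi 0) = (ν.map g).restrict (Ioi 0) := by
  have hcover : Ioi (0 : ℝ≥0∞) = ⋃ k : ℕ, Ioi (k : ℝ≥0∞)⁻¹ := by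
    ext u
    simp only [mem_Ioi, mem_iUnion]
    exact ⟨fun hu => ENNReal.exists_inv_nat_lt hu.ne', fun ⟨_, hk⟩ => zero_le.trans_lt hk⟩
  rw [hcover, Measure.restrict_iUnion_congr]
  intro k
  have hk : 0 < (k : ℝ≥0∞)⁻¹ := ENNReal.inv_pos.2 (natCast_ne_top k)
  have hf_univ : (μ.map f).restrict (Ioi (k : ℝ≥0∞)⁻¹) univ = μ {x | (k : ℝ≥0∞)⁻¹ < f x} := by
    rw [Measure.restrict_apply_univ, Measure.map_apply hf measurableSet_Ioi]; rfl
  have hg_univ : (ν.map g).restrict (Ioi (k : ℝ≥0∞)⁻¹) univ = ν {y | (k : ℝ≥0∞)⁻¹ < g y} := by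
    rw [Measure.restrict_apply_univ, Measure.map_apply hg measurableSet_Ioi]; rfl
  have : IsFiniteMeasure ((μ.map f).restrict (Ioi (k : ℝ≥0∞)⁻¹)) :=
    ⟨by rw [hf_univ]; exact (hfin _ hk).lt_top⟩
  refine ext_of_generate_finite _ (BorelSpace.measurable_eq.trans (borel_eq_generateFrom_Ioi _))
    isPiSystem_Ioi ?_ (by rw [hf_univ, hg_univ, heq _ hk])
  rintro _ ⟨c, rfl⟩
  rw [map_restrict_Ioi_apply_Ioi hf, map_restrict_Ioi_apply_Ioi hg,
    heq _ (hk.trans_le (le_max_right _ _))]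

lemma lintegral_comp_eq_of_measure_setOf_lt_eq {F : ℝ≥0∞ → ℝ≥0∞} (hF : Measurable F)
    (hF0 : F 0 = 0) (hf : Measurable f) (hg : Measurable g)
    (hfin : ∀ c, 0 < c → μ {x | c < f x} ≠ ∞)
    (heq : ∀ c, 0 < c → μ {x | c < f x} = ν {y | c < g y}) :
    ∫⁻ x, F (f x) ∂μ = ∫⁻ y, F (g y) ∂ν := by
  have hsupp : Function.support F ⊆ Ioi 0 := fun u hu =>
    pos_iff_ne_zero.2 fun h => hu (h ▸ hF0)
  rw [← lintegral_map hF hf, ← lintegral_map hF hg,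
    ← setLIntegral_eq_of_support_subset (μ := μ.map f) hsupp,
    ← setLIntegral_eq_of_support_subset (μ := ν.map g) hsupp,
    map_restrict_Ioi_zero_eq_of_measure_setOf_lt_eq hf hg hfin heq]

end Equimeasurable

lemma measurable_measure_ball_norm {E : Type*} [NormedAddCommGroup E] [MeasurableSpace E]
    [OpensMeasurableSpace E] (μ : Measure E) : Measurable fun y : E => μ (Metric.ball 0 ‖y‖) := by
  have hmono : Monotone fun r => μ (Metric.ball (0 : E) r) :=
    fun _ _ hrs => measure_mono (Metric.ball_subset_ball hrs)
  exact hmono.measurable.comp measurable_norm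

lemma exists_radius_measure_ball_eq {E : Type*} [NormedAddCommGroup E] [NormedSpace ℝ E]
    [MeasurableSpace E] [BorelSpace E] [FiniteDimensional ℝ E] [Nontrivial E] (μ : Measure E)
    [μ.IsAddHaarMeasure] {V : ℝ≥0∞} (hV : V ≠ ∞) :
    ∃ R, 0 ≤ R ∧ μ (Metric.ball 0 R) = V ∧ ∀ r, 0 ≤ r → (μ (Metric.ball 0 r) < V ↔ r < R) := by
  set k := μ (Metric.ball (0 : E) 1)
  set d := Module.finrank ℝ E
  have hk0 : k ≠ 0 := (Metric.measure_ball_pos μ 0 one_pos).ne'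
  have hktop : k ≠ ∞ := measure_ball_lt_top.ne
  have hd : d ≠ 0 := Module.finrank_pos.ne'
  set R := (V / k).toReal ^ (1 / d : ℝ)
  have hR : 0 ≤ R := by positivity
  have hVR : V = ENNReal.ofReal (R ^ d) * k := by
    rw [← Real.rpow_natCast, ← Real.rpow_mul ENNReal.toReal_nonneg,
      one_div_mul_cancel (by exact_mod_cast hd), Real.rpow_one,
      ENNReal.ofReal_toReal (ENNReal.div_ne_top hV hk0), ENNReal.div_mul_cancel hk0 hktop]
  refine ⟨R, hR, by rw [Measure.addHaar_ball μ 0 hR, hVR], fun r hr => ?_⟩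
  rw [Measure.addHaar_ball μ 0 hr, hVR, ENNReal.mul_lt_mul_iff_left hk0 hktop,
    ENNReal.ofReal_lt_ofReal_iff_of_nonneg (by positivity)]
  exact pow_lt_pow_iff_left₀ hr hR hd

section Rearrangement

variable {n : ℕ}

lemma volume_ballRearrange {A : Set (EuclideanSpace ℝ (Fin n))} (hA : volume A ≠ ∞) :
    volume (ballRearrange n A) = volume A := by
  rcases Nat.eq_zero_or_pos n with rfl | hn
  · have hrearr : ballRearrange 0 A = {_x | 0 < volume A} := by
      ext x
      simp [ballRearrange, Subsingleton.elim x 0]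
    rcases eq_or_ne (volume A) 0 with h0 | h0
    · simp [hrearr, h0]
    · obtain ⟨a, ha⟩ := nonempty_of_measure_ne_zero h0
      have hA : A = univ := eq_univ_of_forall fun x => Subsingleton.elim a x ▸ ha
      have hrearr_univ : ballRearrange 0 A = univ :=
        hrearr ▸ eq_univ_of_forall fun _ => pos_iff_ne_zero.2 h0
      rw [hrearr_univ, hA]
  · have : Nontrivial (EuclideanSpace ℝ (Fin n)) :=
      Module.nontrivial_of_finrank_pos (R := ℝ) (by rwa [finrank_euclideanSpace_fin])
    obtain ⟨R, -, hball, hlt⟩ :=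
      exists_radius_measure_ball_eq (volume : Measure (EuclideanSpace ℝ (Fin n))) hA
    have hrearr : ballRearrange n A = Metric.ball 0 R := by
      ext y
      rw [Metric.mem_ball, dist_zero_right]
      exact hlt ‖y‖ (norm_nonneg y)
    rw [hrearr, hball]

lemma symmRearr_eq_volume (f : EuclideanSpace ℝ (Fin n) → ℝ≥0∞)
    (y : EuclideanSpace ℝ (Fin n)) :
    symmRearr n f y = volume ({t : ℝ | volume (Metric.ball (0 : EuclideanSpace ℝ (Fin n)) ‖y‖) <
        volume {x | ENNReal.ofReal t < f x}} ∩ Ioi 0) := by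
  set S : Set ℝ := {t | volume (Metric.ball (0 : EuclideanSpace ℝ (Fin n)) ‖y‖) <
    volume {x | ENNReal.ofReal t < f x}}
  have hS : MeasurableSet S :=
    (antitone_measure_setOf_ofReal_lt volume f).measurable measurableSet_Ioi
  change ∫⁻ t in Ioi 0, S.indicator 1 t = _
  rw [lintegral_indicator_one hS, Measure.restrict_apply hS]

lemma setOf_lt_symmRearr (f : EuclideanSpace ℝ (Fin n) → ℝ≥0∞) (c : ℝ≥0∞) :
    {y | c < symmRearr n f y} = ballRearrange n {x | c < f x} := by
  rcases eq_or_ne c ∞ with rfl | hc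
  · simp [ballRearrange]
  rw [← ENNReal.ofReal_toReal hc]
  ext y
  have hS : IsLowerSet {t : ℝ | volume (Metric.ball (0 : EuclideanSpace ℝ (Fin n)) ‖y‖) <
      volume {x | ENNReal.ofReal t < f x}} :=
    fun _ _ hst hs => hs.trans_le (antitone_measure_setOf_ofReal_lt volume f hst)
  rw [mem_ofPred_eq, symmRearr_eq_volume,
    ofReal_lt_volume_inter_Ioi_iff hS ENNReal.toReal_nonneg]
  exact exists_lt_measure_setOf_ofReal_lt_iff volume f _ _

lemma measurable_symmRearr (f : EuclideanSpace ℝ (Fin n) → ℝ≥0∞) :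
    Measurable (symmRearr n f) := by
  refine measurable_of_Ioi fun c => ?_
  change MeasurableSet {y | c < symmRearr n f y}
  rw [setOf_lt_symmRearr]
  exact measurable_measure_ball_norm volume measurableSet_Iio

lemma lintegral_comp_symmRearr {f : EuclideanSpace ℝ (Fin n) → ℝ≥0∞} (hf : Measurable f)
    (hfi : ∫⁻ x, f x ≠ ∞) {F : ℝ≥0∞ → ℝ≥0∞} (hF : Measurable F) (hF0 : F 0 = 0) :
    ∫⁻ x, F (f x) = ∫⁻ y, F (symmRearr n f y) := by
  have hfin : ∀ c, 0 < c → volume {x | c < f x} ≠ ∞ := fun c hc =>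
    measure_setOf_lt_ne_top_of_lintegral_ne_top hf.aemeasurable hfi hc.ne'
  refine lintegral_comp_eq_of_measure_setOf_lt_eq hF hF0 hf (measurable_symmRearr f) hfin
    fun c hc => ?_
  rw [setOf_lt_symmRearr, volume_ballRearrange (hfin c hc)]

end Rearrangement

/-- Rearrangement preserves Shannon differential entropy: if one of `h(f)`, `h(f*)`
is well defined, then so is the other and `h(f) = h(f*)`. -/
theorem entropy_symmRearr (n : ℕ) (f : EuclideanSpace ℝ (Fin n) → ℝ≥0∞)
    (hf : IsDensity n f) (h : EntDefined n f ∨ EntDefined n (symmRearr n f)) :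
    EntDefined n f ∧ EntDefined n (symmRearr n f) ∧
      entropy n f = entropy n (symmRearr n f) := by
  have hfi : ∫⁻ x, f x ≠ ∞ := by simp [hf.2]
  have hφ : Measurable fun u : ℝ≥0∞ => u.toReal * Real.log u.toReal := by fun_prop
  have hPos : entPos n f = entPos n (symmRearr n f) :=
    lintegral_comp_symmRearr hf.1 hfi (ENNReal.measurable_ofReal.comp hφ.neg) (by simp)
  have hNeg : entNeg n f = entNeg n (symmRearr n f) :=
    lintegral_comp_symmRearr hf.1 hfi (ENNReal.measurable_ofReal.comp hφ) (by simp)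
  have hdef : EntDefined n f ↔ EntDefined n (symmRearr n f) := by
    rw [EntDefined, EntDefined, hPos, hNeg]
  exact ⟨h.elim id hdef.2, h.elim hdef.1 id, by rw [entropy, entropy, hPos, hNeg]⟩
end
end

section
/- Let f be a probability density on R^n. Then lim_{p→0+} h_p(f) = log |{x : f(x) ≠ 0}| (where |·| is Lebesgue measure and the limit may be +∞). -/
open MeasureTheory Set Filter ENNReal

noncomputable section

/-! As `p → 0⁺`, `f ^ p` tends pointwise to the indicator of `{f ≠ 0}`, so `∫ f ^ p` tends to the
measure of the support. On `{f ≤ 1}` the powers increase as `p` decreases (monotone convergence);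
on `{f > 1}`, a set of finite measure by Markov's inequality, they are dominated by `f + 1`. -/

open Topology

namespace ENNReal

theorem tendsto_rpow_nhdsGT_zero {c : ℝ≥0∞} (hc : c ≠ ∞) :
    Tendsto (fun p : ℝ => c ^ p) (𝓝[>] 0) (𝓝 (if c = 0 then 0 else 1)) := by
  rcases eq_or_ne c 0 with rfl | hc0
  · refine tendsto_const_nhds.congr' ?_
    filter_upwards [self_mem_nhdsWithin] with p hp
    simp [zero_rpow_of_pos (mem_Ioi.1 hp)]
  lift c to NNReal using hc
  have hc0' : c ≠ 0 := by exact_mod_cast hc0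
  have hlim : Tendsto (fun p : ℝ => c ^ p) (𝓝 0) (𝓝 1) := by
    simpa using (tendsto_const_nhds (x := c)).nnrpow (tendsto_id (x := 𝓝 (0 : ℝ))) (Or.inl hc0')
  rw [if_neg hc0]
  refine ((continuous_coe.tendsto 1).comp (hlim.mono_left nhdsWithin_le_nhds)).congr fun p => ?_
  exact coe_rpow_of_ne_zero hc0' p

theorem rpow_le_add_one (c : ℝ≥0∞) {p : ℝ} (hp₀ : 0 ≤ p) (hp₁ : p ≤ 1) : c ^ p ≤ c + 1 := by
  rcases le_total c 1 with hc | hc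
  · exact (rpow_le_one hc hp₀).trans le_add_self
  · calc c ^ p ≤ c ^ (1 : ℝ) := rpow_le_rpow_of_exponent_le hc hp₁
      _ = c := rpow_one c
      _ ≤ c + 1 := le_self_add

end ENNReal

section SupportMeasure

variable {α : Type*} {f : α → ℝ≥0∞}

theorem tendsto_rpow_nhdsGT_zero_indicator {x : α} (hx : f x ≠ ∞) :
    Tendsto (fun p : ℝ => f x ^ p) (𝓝[>] 0) (𝓝 ({y | f y ≠ 0}.indicator 1 x)) := by
  simpa [indicator_apply, ite_not] using ENNReal.tendsto_rpow_nhdsGT_zero hx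

variable [MeasurableSpace α] {μ : Measure α}

theorem lintegral_indicator_support_one (hf : Measurable f) :
    ∫⁻ x, {y | f y ≠ 0}.indicator 1 x ∂μ = μ {x | f x ≠ 0} :=
  lintegral_indicator_one (hf (measurableSet_singleton 0)).compl

theorem tendsto_lintegral_rpow_nhdsGT_zero_of_ae_le_one (hf : Measurable f)
    (hf₁ : ∀ᵐ x ∂μ, f x ≤ 1) :
    Tendsto (fun p : ℝ => ∫⁻ x, f x ^ p ∂μ) (𝓝[>] 0) (𝓝 (μ {x | f x ≠ 0})) := by
  have hanti : Antitone fun p : ℝ => ∫⁻ x, f x ^ p ∂μ := fun p q hpq =>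
    lintegral_mono_ae <| hf₁.mono fun x hx => ENNReal.rpow_le_rpow_of_exponent_ge hx hpq
  set u : ℕ → ℝ := fun k => 1 / ((k : ℝ) + 1)
  have hu : Tendsto u atTop (𝓝[>] 0) :=
    tendsto_nhdsWithin_of_tendsto_nhds_of_eventually_within _
      tendsto_one_div_add_atTop_nhds_zero_nat
      (Eventually.of_forall fun k => mem_Ioi.2 (by positivity))
  have hseq : Tendsto (fun k => ∫⁻ x, f x ^ u k ∂μ) atTop (𝓝 (μ {x | f x ≠ 0})) := by
    rw [← lintegral_indicator_support_one hf]
    refine lintegral_tendsto_of_tendsto_of_monotone (fun k => (hf.pow_const _).aemeasurable)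
      (hf₁.mono fun x hx k l hkl => ?_)
      (hf₁.mono fun x hx => (tendsto_rpow_nhdsGT_zero_indicator
        (ne_top_of_le_ne_top one_ne_top hx)).comp hu)
    exact ENNReal.rpow_le_rpow_of_exponent_ge hx (Nat.one_div_le_one_div hkl)
  have hsup := hanti.tendsto_nhdsGT 0
  rwa [tendsto_nhds_unique (hsup.comp hu) hseq] at hsup

theorem tendsto_lintegral_rpow_nhdsGT_zero_of_isFiniteMeasure [IsFiniteMeasure μ]
    (hf : Measurable f) (hfi : ∫⁻ x, f x ∂μ ≠ ∞) :
    Tendsto (fun p : ℝ => ∫⁻ x, f x ^ p ∂μ) (𝓝[>] 0) (𝓝 (μ {x | f x ≠ 0})) := by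
  rw [← lintegral_indicator_support_one hf]
  refine tendsto_lintegral_filter_of_dominated_convergence (fun x => f x + 1)
    (Eventually.of_forall fun p => hf.pow_const p) ?_ ?_
    ((ae_lt_top hf hfi).mono fun x hx => tendsto_rpow_nhdsGT_zero_indicator hx.ne)
  · filter_upwards [Ioc_mem_nhdsGT zero_lt_one] with p hp
    exact ae_of_all _ fun x => ENNReal.rpow_le_add_one (f x) hp.1.le hp.2
  · rw [lintegral_add_right _ measurable_const, lintegral_const, one_mul]
    exact ENNReal.add_ne_top.2 ⟨hfi, measure_ne_top μ univ⟩

theorem tendsto_lintegral_rpow_nhdsGT_zero (hf : Measurable f) (hfi : ∫⁻ x, f x ∂μ ≠ ∞) :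
    Tendsto (fun p : ℝ => ∫⁻ x, f x ^ p ∂μ) (𝓝[>] 0) (𝓝 (μ {x | f x ≠ 0})) := by
  set A := {x | f x ≤ 1}
  have hA : MeasurableSet A := measurableSet_le hf measurable_const
  have hAc : μ Aᶜ ≠ ∞ := by
    have hsub : Aᶜ ⊆ {x | 1 ≤ f x} := fun x (hx : ¬f x ≤ 1) => (not_le.1 hx).le
    have hmarkov : μ {x | 1 ≤ f x} ≤ ∫⁻ x, f x ∂μ := by
      simpa using mul_meas_ge_le_lintegral hf 1
    exact ne_top_of_le_ne_top hfi ((measure_mono hsub).trans hmarkov)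
  have : IsFiniteMeasure (μ.restrict Aᶜ) := isFiniteMeasure_restrict.2 hAc
  have hle := tendsto_lintegral_rpow_nhdsGT_zero_of_ae_le_one (μ := μ.restrict A) hf
    (ae_restrict_mem hA)
  have hgt := tendsto_lintegral_rpow_nhdsGT_zero_of_isFiniteMeasure (μ := μ.restrict Aᶜ) hf
    (ne_top_of_le_ne_top hfi (setLIntegral_le_lintegral _ _))
  simpa only [lintegral_add_compl _ hA, ← Measure.add_apply,
    Measure.restrict_add_restrict_compl hA] using hle.add hgt

end SupportMeasure

/-- For a probability density `f` on `ℝⁿ`,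
`lim_{p→0+} h_p(f) = log |{x : f x ≠ 0}|` (the limit may be `+∞`). -/
theorem renyi_tendsto_zero (n : ℕ) (f : EuclideanSpace ℝ (Fin n) → ℝ≥0∞)
    (hf : IsDensity n f) :
    Tendsto (fun p : ℝ => renyi n f p) (nhdsWithin 0 (Ioi 0))
      (nhds (ENNReal.log (volume {x | f x ≠ 0}))) := by
  obtain ⟨hm, hint⟩ := hf
  have hlog : Tendsto (fun p : ℝ => ENNReal.log (∫⁻ x, f x ^ p)) (𝓝[>] 0)
      (𝓝 (ENNReal.log (volume {x | f x ≠ 0}))) :=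
    (ENNReal.continuous_log.tendsto _).comp
      (tendsto_lintegral_rpow_nhdsGT_zero hm (hint ▸ one_ne_top))
  have hcoef : Tendsto (fun p : ℝ => (((1 - p)⁻¹ : ℝ) : EReal)) (𝓝[>] 0) (𝓝 1) := by
    have : ContinuousAt (fun p : ℝ => (1 - p)⁻¹) 0 :=
      (continuousAt_const.sub continuousAt_id).inv₀ (by norm_num)
    simpa using EReal.tendsto_coe.2 (this.tendsto.mono_left nhdsWithin_le_nhds)
  simpa [renyi] using EReal.Tendsto.mul hcoef hlog (.inl one_ne_zero) (.inl one_ne_zero)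
    (.inl (EReal.coe_ne_bot 1)) (.inl (EReal.coe_ne_top 1))
end
end

section
/- Let f be a probability density on R^n. If lim_{p→1+} h_p(f) > −∞ (the limit existing by monotonicity), then the Shannon entropy h(f) = −∫ f log f dx is well defined (possibly +∞) and equals lim_{p→1+} h_p(f). -/
open MeasureTheory Set Filter ENNReal

noncomputable section

/-! For `t ≥ 0` the quotient `(t ^ p - t) / (p - 1)` is the slope at `1` of the convex function
`q ↦ t ^ q`, so it decreases to `t log t` as `p ↓ 1`. Integrated against `dx`, its negative part
increases to the positive part of `-f log f` and its positive part decreases to the negative part;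
the latter convergence is dominated by the value at a `p₀ > 1` with `∫ f ^ p₀ < ∞`, which exists
because `h_p(f) = -∞` whenever `∫ f ^ p = ∞`. Hence `∫ (f log f)⁺ < ∞` and
`(1 - ∫ f ^ p) / (p - 1) → h(f)`. Finally `1 - 1/G ≤ log G ≤ G - 1` squeezes
`h_p(f) = -log (∫ f ^ p) / (p - 1)` between `(1 - G) / (p - 1)` and `(1 - G) / ((p - 1) G)` for
`G = ∫ f ^ p → 1`. -/

open scoped Topology

-- Both sides equal `ofReal (max a b)`.
theorem ENNReal.ofReal_add_ofReal_sub_comm {a b : ℝ} (ha : 0 ≤ a) (hb : 0 ≤ b) :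
    ENNReal.ofReal a + ENNReal.ofReal (b - a) = ENNReal.ofReal b + ENNReal.ofReal (a - b) := by
  rcases le_total a b with h | h
  · rw [ENNReal.ofReal_of_nonpos (sub_nonpos.2 h), add_zero,
      ← ENNReal.ofReal_add ha (sub_nonneg.2 h), add_sub_cancel]
  · rw [ENNReal.ofReal_of_nonpos (sub_nonpos.2 h), add_zero,
      ← ENNReal.ofReal_add hb (sub_nonneg.2 h), add_sub_cancel]

theorem ENNReal.toReal_eq_one_sub_of_add_mul_eq {G A B : ℝ≥0∞} {c : ℝ} (hc : 0 < c)
    (hA : A ≠ ⊤) (h : G + ENNReal.ofReal c * B = 1 + ENNReal.ofReal c * A) :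
    G ≠ ⊤ ∧ B ≠ ⊤ ∧ G.toReal = 1 - c * (B.toReal - A.toReal) := by
  obtain ⟨hG, hcB⟩ := ENNReal.add_ne_top.1 (h ▸ by finiteness : G + ENNReal.ofReal c * B ≠ ⊤)
  have hB : B ≠ ⊤ := by simpa [ENNReal.mul_eq_top, hc] using hcB
  refine ⟨hG, hB, ?_⟩
  have := congrArg ENNReal.toReal h
  rw [ENNReal.toReal_add hG hcB, ENNReal.toReal_add (by simp) (by finiteness),
    ENNReal.toReal_mul, ENNReal.toReal_mul, ENNReal.toReal_ofReal hc.le,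
    ENNReal.toReal_one] at this
  linarith

theorem EReal.tendsto_coe_ennreal_sub {α : Type*} {l : Filter α} {a b : α → ℝ≥0∞}
    {x y : ℝ≥0∞} (ha : Tendsto a l (𝓝 x)) (hb : Tendsto b l (𝓝 y)) (hy : y ≠ ⊤) :
    Tendsto (fun i => (a i : EReal) - b i) l (𝓝 ((x : EReal) - y)) := by
  have hb' : Tendsto (fun i => -(b i : EReal)) l (𝓝 (-(y : EReal))) :=
    (continuous_neg.tendsto _).comp (EReal.tendsto_coe_ennreal.2 hb)
  refine (EReal.continuousAt_add (.inr ?_) (.inl (by simp))).tendsto.comp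
    ((EReal.tendsto_coe_ennreal.2 ha).prodMk_nhds hb')
  simpa using hy

theorem slope_zero_rpow {p : ℝ} (hp : 1 < p) : slope (fun q : ℝ => (0 : ℝ) ^ q) 1 p = 0 := by
  simp [slope_def_field, Real.zero_rpow (by linarith : p ≠ 0)]

theorem monotoneOn_slope_rpow {t : ℝ} (ht : 0 ≤ t) :
    MonotoneOn (slope (fun q => t ^ q) 1) (Ioi (1 : ℝ)) := by
  rcases ht.eq_or_lt with rfl | ht
  · intro p hp q hq _
    rw [slope_zero_rpow hp, slope_zero_rpow hq]
  · exact ((convexOn_rpow_left ht).slope_mono (mem_univ 1)).mono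
      fun q hq => ⟨mem_univ q, ne_of_gt hq⟩

theorem tendsto_slope_rpow {t : ℝ} (ht : 0 ≤ t) :
    Tendsto (slope (fun q => t ^ q) 1) (𝓝[>] (1 : ℝ)) (𝓝 (t * Real.log t)) := by
  rcases ht.eq_or_lt with rfl | ht
  · rw [zero_mul]
    refine tendsto_const_nhds.congr' ?_
    filter_upwards [self_mem_nhdsWithin] with p hp using (slope_zero_rpow hp).symm
  · have := (Real.hasStrictDerivAt_const_rpow ht 1).hasDerivAt.tendsto_slope
    rw [Real.rpow_one] at this
    exact this.mono_left (nhdsWithin_mono _ fun p hp => ne_of_gt hp)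

theorem mul_log_le_slope_rpow {t p : ℝ} (ht : 0 ≤ t) (hp : 1 < p) :
    t * Real.log t ≤ slope (fun q => t ^ q) 1 p :=
  le_of_tendsto (tendsto_slope_rpow ht) <| by
    filter_upwards [Ioc_mem_nhdsGT hp] with q hq using
      monotoneOn_slope_rpow ht hq.1 (mem_Ioi.2 hp) hq.2

theorem ofReal_rpow_add_mul_ofReal_neg_slope_rpow {t p : ℝ} (ht : 0 ≤ t) (hp : 1 < p) :
    ENNReal.ofReal t ^ p +
        ENNReal.ofReal (p - 1) * ENNReal.ofReal (-slope (fun q => t ^ q) 1 p) =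
      ENNReal.ofReal t + ENNReal.ofReal (p - 1) * ENNReal.ofReal (slope (fun q => t ^ q) 1 p) := by
  have hp' : 0 ≤ p - 1 := by linarith
  have hmul : (p - 1) * slope (fun q => t ^ q) 1 p = t ^ p - t := by
    rw [slope_def_field, Real.rpow_one, mul_div_cancel₀ _ (by linarith)]
  rw [← ENNReal.ofReal_mul hp', ← ENNReal.ofReal_mul hp', mul_neg, hmul, neg_sub,
    ENNReal.ofReal_rpow_of_nonneg ht (by linarith)]
  exact ENNReal.ofReal_add_ofReal_sub_comm (by positivity) ht

theorem ofReal_slope_rpow_le {a : ℝ≥0∞} {p : ℝ} (hp : 1 < p) :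
    ENNReal.ofReal (slope (fun q : ℝ => a.toReal ^ q) 1 p) ≤ ENNReal.ofReal (p - 1)⁻¹ * a ^ p := by
  have hslope : slope (fun q : ℝ => a.toReal ^ q) 1 p ≤ (p - 1)⁻¹ * a.toReal ^ p := by
    rw [slope_def_field, Real.rpow_one, div_eq_inv_mul]
    exact mul_le_mul_of_nonneg_left (sub_le_self _ ENNReal.toReal_nonneg)
      (inv_nonneg.2 (by linarith))
  calc ENNReal.ofReal (slope (fun q : ℝ => a.toReal ^ q) 1 p)
      ≤ ENNReal.ofReal (p - 1)⁻¹ * ENNReal.ofReal (a.toReal ^ p) := by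
        rw [← ENNReal.ofReal_mul (inv_nonneg.2 (by linarith))]
        exact ENNReal.ofReal_le_ofReal hslope
    _ ≤ ENNReal.ofReal (p - 1)⁻¹ * a ^ p := by
        rw [← ENNReal.ofReal_rpow_of_nonneg ENNReal.toReal_nonneg (by linarith)]
        gcongr
        exact ENNReal.ofReal_toReal_le

theorem inv_one_sub_mul_log_one_sub_mul_mem_Icc {p y : ℝ} (hp : 1 < p)
    (hy : 0 < 1 - (p - 1) * y) :
    (1 - p)⁻¹ * Real.log (1 - (p - 1) * y) ∈ Icc y (y / (1 - (p - 1) * y)) := by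
  have hupper := Real.log_le_sub_one_of_pos hy
  have hlower := Real.one_sub_inv_le_log_of_pos hy
  have hinv : (1 - (p - 1) * y)⁻¹ * (1 - (p - 1) * y) = 1 := inv_mul_cancel₀ hy.ne'
  rw [inv_mul_eq_div, mem_Icc, le_div_iff_of_neg (by linarith), div_le_iff_of_neg (by linarith),
    div_eq_mul_inv]
  exact ⟨by nlinarith, by nlinarith⟩

theorem tendsto_inv_one_sub_mul_log_one_sub_mul {y : ℝ → ℝ} {e : EReal}
    (hy : Tendsto (fun p => (y p : EReal)) (𝓝[>] 1) (𝓝 e)) (he : e ≠ ⊥)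
    (hpos : ∀ᶠ p in 𝓝[>] 1, 0 < 1 - (p - 1) * y p) :
    Tendsto (fun p => (((1 - p)⁻¹ * Real.log (1 - (p - 1) * y p) : ℝ) : EReal))
      (𝓝[>] 1) (𝓝 e) := by
  have hbounds : ∀ᶠ p in 𝓝[>] 1, (1 - p)⁻¹ * Real.log (1 - (p - 1) * y p) ∈
      Icc (y p) (y p / (1 - (p - 1) * y p)) := by
    filter_upwards [hpos, self_mem_nhdsWithin] with p hpos hp
    exact inv_one_sub_mul_log_one_sub_mul_mem_Icc hp hpos
  induction e using EReal.rec with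
  | bot => exact absurd rfl he
  | top => exact tendsto_nhds_top_mono hy (hbounds.mono fun p h => EReal.coe_le_coe_iff.2 h.1)
  | coe x =>
    rw [EReal.tendsto_coe] at hy ⊢
    have hsub : Tendsto (fun p : ℝ => p - 1) (𝓝[>] 1) (𝓝 0) :=
      tendsto_nhdsWithin_of_tendsto_nhds (by simpa using (continuous_sub_right (1 : ℝ)).tendsto 1)
    have hG : Tendsto (fun p => 1 - (p - 1) * y p) (𝓝[>] 1) (𝓝 1) := by
      simpa using tendsto_const_nhds.sub (hsub.mul hy)
    have hupper := hy.div hG one_ne_zero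
    rw [div_one] at hupper
    exact tendsto_of_tendsto_of_tendsto_of_le_of_le' hy hupper
      (hbounds.mono fun _ h => h.1) (hbounds.mono fun _ h => h.2)

theorem tendsto_inv_one_sub_mul_log_of_add_mul_eq {G A B : ℝ → ℝ≥0∞} {a b : ℝ≥0∞}
    (hA : Tendsto A (𝓝[>] 1) (𝓝 a)) (ha : a ≠ ⊤) (hB : Tendsto B (𝓝[>] 1) (𝓝 b))
    (hG : ∀ᶠ p in 𝓝[>] 1, G p ≠ 0 ∧
      G p + ENNReal.ofReal (p - 1) * B p = 1 + ENNReal.ofReal (p - 1) * A p) :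
    Tendsto (fun p => (((1 - p)⁻¹ : ℝ) : EReal) * ENNReal.log (G p)) (𝓝[>] 1)
      (𝓝 ((b : EReal) - a)) := by
  set y : ℝ → ℝ := fun p => (B p).toReal - (A p).toReal
  have hreal : ∀ᶠ p in 𝓝[>] 1, (B p : EReal) - A p = (y p : EReal) ∧
      0 < 1 - (p - 1) * y p ∧
      (((1 - p)⁻¹ : ℝ) : EReal) * ENNReal.log (G p) =
        (((1 - p)⁻¹ * Real.log (1 - (p - 1) * y p) : ℝ) : EReal) := by
    filter_upwards [hG, hA.eventually (eventually_ne_nhds ha), self_mem_nhdsWithin]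
      with p ⟨hG0, hGAB⟩ hAp hp
    obtain ⟨hGp, hBp, hGy⟩ :=
      ENNReal.toReal_eq_one_sub_of_add_mul_eq (sub_pos.2 (mem_Ioi.1 hp)) hAp hGAB
    refine ⟨?_, hGy ▸ ENNReal.toReal_pos hG0 hGp, ?_⟩
    · rw [← EReal.coe_ennreal_toReal hBp, ← EReal.coe_ennreal_toReal hAp, ← EReal.coe_sub]
    · rw [ENNReal.log_pos_real hG0 hGp, ← EReal.coe_mul, hGy]
  have hy : Tendsto (fun p => (y p : EReal)) (𝓝[>] 1) (𝓝 ((b : EReal) - a)) :=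
    (EReal.tendsto_coe_ennreal_sub hB hA ha).congr' (hreal.mono fun _ h => h.1)
  refine (tendsto_inv_one_sub_mul_log_one_sub_mul hy ?_ (hreal.mono fun _ h => h.2.1)).congr'
    (hreal.mono fun _ h => h.2.2.symm)
  rw [← EReal.coe_ennreal_toReal ha, sub_eq_add_neg, Ne, EReal.add_eq_bot_iff, not_or]
  exact ⟨EReal.coe_ennreal_ne_bot b, EReal.coe_ne_bot _⟩

section Lintegral

variable {α : Type*} [MeasurableSpace α] {μ : Measure α} {f : α → ℝ≥0∞}

theorem lintegral_rpow_ne_zero (hf : AEMeasurable f μ) (h : ∫⁻ x, f x ∂μ ≠ 0) {p : ℝ}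
    (hp : 0 < p) : ∫⁻ x, f x ^ p ∂μ ≠ 0 := by
  refine fun h0 => h ((lintegral_eq_zero_iff' hf).2 ?_)
  filter_upwards [(lintegral_eq_zero_iff' (hf.pow_const p)).1 h0] with x hx
  simpa [ENNReal.rpow_eq_zero_iff, hp, not_lt_of_gt hp] using hx

theorem measurable_slope_rpow_toReal (hf : Measurable f) (p : ℝ) :
    Measurable fun x => slope (fun q : ℝ => (f x).toReal ^ q) 1 p := by
  simp only [slope_def_field]
  fun_prop

theorem lintegral_ofReal_slope_rpow_ne_top {p : ℝ} (hp : 1 < p) (h : ∫⁻ x, f x ^ p ∂μ ≠ ⊤) :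
    ∫⁻ x, ENNReal.ofReal (slope (fun q : ℝ => (f x).toReal ^ q) 1 p) ∂μ ≠ ⊤ := by
  refine ne_top_of_le_ne_top (b := ENNReal.ofReal (p - 1)⁻¹ * ∫⁻ x, f x ^ p ∂μ)
    (by finiteness) ?_
  calc ∫⁻ x, ENNReal.ofReal (slope (fun q : ℝ => (f x).toReal ^ q) 1 p) ∂μ
      ≤ ∫⁻ x, ENNReal.ofReal (p - 1)⁻¹ * f x ^ p ∂μ :=
        lintegral_mono fun x => ofReal_slope_rpow_le hp
    _ = ENNReal.ofReal (p - 1)⁻¹ * ∫⁻ x, f x ^ p ∂μ :=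
        lintegral_const_mul' _ _ ENNReal.ofReal_ne_top

theorem lintegral_ofReal_mul_log_le_slope_rpow {p : ℝ} (hp : 1 < p) :
    ∫⁻ x, ENNReal.ofReal ((f x).toReal * Real.log (f x).toReal) ∂μ ≤
      ∫⁻ x, ENNReal.ofReal (slope (fun q : ℝ => (f x).toReal ^ q) 1 p) ∂μ :=
  lintegral_mono fun _ =>
    ENNReal.ofReal_le_ofReal (mul_log_le_slope_rpow ENNReal.toReal_nonneg hp)

-- There is no integrable majorant (the limit may be `∞`), so Fatou's lemma replaces dominated
-- convergence.
theorem tendsto_lintegral_ofReal_neg_slope_rpow (hf : Measurable f) :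
    Tendsto (fun p : ℝ => ∫⁻ x, ENNReal.ofReal (-slope (fun q : ℝ => (f x).toReal ^ q) 1 p) ∂μ)
      (𝓝[>] (1 : ℝ))
      (𝓝 (∫⁻ x, ENNReal.ofReal (-((f x).toReal * Real.log (f x).toReal)) ∂μ)) := by
  have hlim (x : α) :
      Tendsto (fun p : ℝ => ENNReal.ofReal (-slope (fun q : ℝ => (f x).toReal ^ q) 1 p))
        (𝓝[>] (1 : ℝ)) (𝓝 (ENNReal.ofReal (-((f x).toReal * Real.log (f x).toReal)))) :=
    ENNReal.tendsto_ofReal (tendsto_slope_rpow ENNReal.toReal_nonneg).neg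
  refine tendsto_of_le_liminf_of_limsup_le ?_ ?_
  · calc ∫⁻ x, ENNReal.ofReal (-((f x).toReal * Real.log (f x).toReal)) ∂μ
        = ∫⁻ x, liminf (fun p : ℝ => ENNReal.ofReal (-slope (fun q : ℝ => (f x).toReal ^ q) 1 p))
            (𝓝[>] (1 : ℝ)) ∂μ := lintegral_congr fun x => (hlim x).liminf_eq.symm
      _ ≤ _ := lintegral_liminf_le fun p =>
          (measurable_slope_rpow_toReal hf p).neg.ennreal_ofReal
  · refine limsup_le_of_le (by isBoundedDefault) ?_
    filter_upwards [self_mem_nhdsWithin] with p hp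
    exact lintegral_mono fun x => ENNReal.ofReal_le_ofReal
      (neg_le_neg (mul_log_le_slope_rpow ENNReal.toReal_nonneg hp))

theorem tendsto_lintegral_ofReal_slope_rpow (hf : Measurable f) {p₀ : ℝ} (hp₀ : 1 < p₀)
    (hfin : ∫⁻ x, ENNReal.ofReal (slope (fun q : ℝ => (f x).toReal ^ q) 1 p₀) ∂μ ≠ ⊤) :
    Tendsto (fun p : ℝ => ∫⁻ x, ENNReal.ofReal (slope (fun q : ℝ => (f x).toReal ^ q) 1 p) ∂μ)
      (𝓝[>] (1 : ℝ)) (𝓝 (∫⁻ x, ENNReal.ofReal ((f x).toReal * Real.log (f x).toReal) ∂μ)) := by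
  refine tendsto_lintegral_filter_of_dominated_convergence _
    (.of_forall fun p => (measurable_slope_rpow_toReal hf p).ennreal_ofReal) ?_ hfin
    (ae_of_all _ fun x => ENNReal.tendsto_ofReal (tendsto_slope_rpow ENNReal.toReal_nonneg))
  filter_upwards [Ioc_mem_nhdsGT hp₀] with p hp
  exact ae_of_all _ fun x => ENNReal.ofReal_le_ofReal
    (monotoneOn_slope_rpow ENNReal.toReal_nonneg hp.1 (mem_Ioi.2 hp₀) hp.2)

theorem lintegral_rpow_add_mul_lintegral_ofReal_neg_slope_rpow (hf : Measurable f)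
    (hf_fin : ∀ᵐ x ∂μ, f x ≠ ⊤) {p : ℝ} (hp : 1 < p) :
    ∫⁻ x, f x ^ p ∂μ + ENNReal.ofReal (p - 1) *
        ∫⁻ x, ENNReal.ofReal (-slope (fun q : ℝ => (f x).toReal ^ q) 1 p) ∂μ =
      ∫⁻ x, f x ∂μ + ENNReal.ofReal (p - 1) *
        ∫⁻ x, ENNReal.ofReal (slope (fun q : ℝ => (f x).toReal ^ q) 1 p) ∂μ := by
  rw [← lintegral_const_mul' _ _ ENNReal.ofReal_ne_top,
    ← lintegral_const_mul' _ _ ENNReal.ofReal_ne_top,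
    ← lintegral_add_left (hf.pow_const p), ← lintegral_add_left hf]
  refine lintegral_congr_ae ?_
  filter_upwards [hf_fin] with x hx
  have := ofReal_rpow_add_mul_ofReal_neg_slope_rpow (ENNReal.toReal_nonneg (a := f x)) hp
  rwa [ENNReal.ofReal_toReal hx] at this

end Lintegral

theorem exists_lintegral_rpow_ne_top_of_tendsto_renyi {n : ℕ}
    {f : EuclideanSpace ℝ (Fin n) → ℝ≥0∞} {L : EReal}
    (hL : Tendsto (fun p : ℝ => renyi n f p) (𝓝[>] 1) (𝓝 L)) (hbot : ⊥ < L) :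
    ∃ p : ℝ, 1 < p ∧ ∫⁻ x, f x ^ p ≠ ⊤ := by
  obtain ⟨p, hp_bot, hp⟩ :=
    ((hL.eventually (eventually_ne_nhds hbot.ne')).and self_mem_nhdsWithin).exists
  refine ⟨p, hp, fun htop => hp_bot ?_⟩
  rw [renyi, htop, ENNReal.log_top, EReal.coe_mul_top_of_neg (inv_lt_zero.2 (by linarith))]

/-- If `lim_{p→1+} h_p(f) > -∞`, then the Shannon entropy `h(f)` is well defined
(possibly `+∞`) and equals this limit. -/
theorem entropy_eq_lim_renyi_right (n : ℕ) (f : EuclideanSpace ℝ (Fin n) → ℝ≥0∞)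
    (hf : IsDensity n f) (L : EReal)
    (hL : Tendsto (fun p : ℝ => renyi n f p) (nhdsWithin 1 (Ioi 1)) (nhds L))
    (hbot : ⊥ < L) :
    EntDefined n f ∧ entropy n f = L := by
  obtain ⟨hf_meas, hf_one⟩ := hf
  obtain ⟨p₀, hp₀, hG₀⟩ := exists_lintegral_rpow_ne_top_of_tendsto_renyi hL hbot
  have hA₀ := lintegral_ofReal_slope_rpow_ne_top hp₀ hG₀
  have hentNeg : entNeg n f ≠ ⊤ :=
    ne_top_of_le_ne_top hA₀ (lintegral_ofReal_mul_log_le_slope_rpow hp₀)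
  have hf_fin : ∀ᵐ x, f x ≠ ⊤ := (ae_lt_top hf_meas (by simp [hf_one])).mono fun _ => ne_of_lt
  refine ⟨Or.inr hentNeg, tendsto_nhds_unique ?_ hL⟩
  refine tendsto_inv_one_sub_mul_log_of_add_mul_eq
    (tendsto_lintegral_ofReal_slope_rpow hf_meas hp₀ hA₀) hentNeg
    (tendsto_lintegral_ofReal_neg_slope_rpow hf_meas) ?_
  filter_upwards [self_mem_nhdsWithin] with p hp
  refine ⟨lintegral_rpow_ne_zero hf_meas.aemeasurable (by simp [hf_one]) (by linarith [hp.out]), ?_⟩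
  rw [lintegral_rpow_add_mul_lintegral_ofReal_neg_slope_rpow hf_meas hf_fin hp, hf_one]
end
end

section
/- Let f be a probability density on R^n that is everywhere defined and lower semicontinuous. Then lim_{p→∞} h_p(f) = −log sup_x f(x). -/
open MeasureTheory Set Filter ENNReal

noncomputable section

/-!
Write `I_p = ∫ f^p`, so that `h_p(f) = -log I_p^{1/(p-1)}`; it suffices that
`I_p^{1/(p-1)} → M := sup f`. From above, `f^p ≤ M^{p-1} f` gives `I_p ≤ M^{p-1}`.
From below, for `0 < c < M` the set `{f > c}` is open by lower semicontinuity and nonempty,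
so `v := |{f ≥ c}|` is positive, and finite by Markov's inequality; then
`I_p^{1/(p-1)} ≥ (c^p v)^{1/(p-1)} = c (c v)^{1/(p-1)} → c`.
-/

open Topology
open scoped NNReal

namespace ENNReal

lemma rpow_eq_rpow_sub_one_mul {p : ℝ} (hp : 1 ≤ p) (a : ℝ≥0∞) :
    a ^ p = a ^ (p - 1) * a := by
  simpa using rpow_add_of_nonneg (x := a) (p - 1) 1 (sub_nonneg.2 hp) zero_le_one

lemma rpow_le_rpow_sub_one_mul {a b : ℝ≥0∞} {p : ℝ} (hp : 1 ≤ p) (hab : a ≤ b) :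
    a ^ p ≤ b ^ (p - 1) * a := by
  rw [rpow_eq_rpow_sub_one_mul hp]
  gcongr

lemma rpow_mul_rpow_inv {q : ℝ} (hq : 0 < q) (a x : ℝ≥0∞) :
    (a ^ q * x) ^ q⁻¹ = a * x ^ q⁻¹ := by
  rw [mul_rpow_of_nonneg _ _ (inv_nonneg.2 hq.le), ← rpow_mul, mul_inv_cancel₀ hq.ne', rpow_one]

lemma tendsto_rpow_inv_sub_one_atTop {a : ℝ≥0∞} (h0 : a ≠ 0) (htop : a ≠ ⊤) :
    Tendsto (fun p : ℝ => a ^ (p - 1)⁻¹) atTop (𝓝 1) := by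
  lift a to ℝ≥0 using htop
  have h0' : a ≠ 0 := mod_cast h0
  have hexp : Tendsto (fun p : ℝ => (p - 1)⁻¹) atTop (𝓝 0) :=
    tendsto_inv_atTop_zero.comp (tendsto_atTop_add_const_right _ (-1) tendsto_id)
  have hnn :=
    (tendsto_const_nhds : Tendsto (fun _ : ℝ => a) atTop (𝓝 a)).nnrpow hexp (Or.inl h0')
  rw [NNReal.rpow_zero] at hnn
  simp_rw [← coe_rpow_of_ne_zero h0', ← coe_one]
  exact tendsto_coe.2 hnn

end ENNReal

section

variable {α : Type*} [MeasurableSpace α] {μ : Measure α} {f : α → ℝ≥0∞}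

lemma lintegral_rpow_le_iSup_rpow_mul (hf : Measurable f) {p : ℝ} (hp : 1 ≤ p) :
    ∫⁻ x, f x ^ p ∂μ ≤ (⨆ x, f x) ^ (p - 1) * ∫⁻ x, f x ∂μ := by
  calc ∫⁻ x, f x ^ p ∂μ ≤ ∫⁻ x, (⨆ x, f x) ^ (p - 1) * f x ∂μ :=
        lintegral_mono fun x => rpow_le_rpow_sub_one_mul hp (le_iSup f x)
    _ = (⨆ x, f x) ^ (p - 1) * ∫⁻ x, f x ∂μ := lintegral_const_mul _ hf

lemma rpow_mul_measure_le_lintegral_rpow (hf : Measurable f) {p : ℝ} (hp : 0 ≤ p)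
    (c : ℝ≥0∞) : c ^ p * μ {x | c ≤ f x} ≤ ∫⁻ x, f x ^ p ∂μ := by
  calc c ^ p * μ {x | c ≤ f x} ≤ c ^ p * μ {x | c ^ p ≤ f x ^ p} :=
        mul_le_mul_right (measure_mono fun _ hx => rpow_le_rpow hx hp) _
    _ ≤ ∫⁻ x, f x ^ p ∂μ := mul_meas_ge_le_lintegral (hf.pow_const p) _

lemma LowerSemicontinuous.measure_lt_pos [TopologicalSpace α] [μ.IsOpenPosMeasure]
    (hf : LowerSemicontinuous f) {c : ℝ≥0∞} (hc : c < ⨆ x, f x) : 0 < μ {x | c < f x} := by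
  obtain ⟨x, hx⟩ := lt_iSup_iff.1 hc
  exact (hf.isOpen_preimage c).measure_pos μ ⟨x, hx⟩

lemma eventually_lt_lintegral_rpow_rpow_inv_sub_one [TopologicalSpace α] [μ.IsOpenPosMeasure]
    (hf : Measurable f) (hlsc : LowerSemicontinuous f) (hint : ∫⁻ x, f x ∂μ ≠ ⊤)
    {b : ℝ≥0∞} (hb : b < ⨆ x, f x) :
    ∀ᶠ p : ℝ in atTop, b < (∫⁻ x, f x ^ p ∂μ) ^ (p - 1)⁻¹ := by
  obtain ⟨c, hbc, hcM⟩ := exists_between hb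
  have hc0 : c ≠ 0 := (hbc.trans_le' zero_le).ne'
  have hctop : c ≠ ⊤ := hcM.ne_top
  set v := μ {x | c ≤ f x}
  have hv0 : v ≠ 0 := ((hlsc.measure_lt_pos hcM).trans_le
    (measure_mono (ofPred_subset_ofPred.2 fun _ => le_of_lt))).ne'
  have hvtop : v ≠ ⊤ :=
    (lt_top_of_mul_ne_top_right (ne_top_of_le_ne_top hint (mul_meas_ge_le_lintegral hf c))
      hc0).ne
  have hlim : Tendsto (fun p : ℝ => c * (c * v) ^ (p - 1)⁻¹) atTop (𝓝 c) := by
    simpa using ENNReal.Tendsto.const_mul (tendsto_rpow_inv_sub_one_atTop (mul_ne_zero hc0 hv0)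
      (mul_ne_top hctop hvtop)) (Or.inr hctop)
  filter_upwards [hlim.eventually (lt_mem_nhds hbc), eventually_gt_atTop 1] with p hp hp1
  have hq : 0 < p - 1 := sub_pos.2 hp1
  calc b < c * (c * v) ^ (p - 1)⁻¹ := hp
    _ = (c ^ p * v) ^ (p - 1)⁻¹ := by
        rw [← rpow_mul_rpow_inv hq, ← mul_assoc, ← rpow_eq_rpow_sub_one_mul hp1.le]
    _ ≤ (∫⁻ x, f x ^ p ∂μ) ^ (p - 1)⁻¹ :=
        rpow_le_rpow (rpow_mul_measure_le_lintegral_rpow hf (by linarith) c) (inv_nonneg.2 hq.le)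

lemma eventually_lintegral_rpow_rpow_inv_sub_one_lt (hf : Measurable f)
    (h0 : ∫⁻ x, f x ∂μ ≠ 0) (htop : ∫⁻ x, f x ∂μ ≠ ⊤) {b : ℝ≥0∞}
    (hb : ⨆ x, f x < b) :
    ∀ᶠ p : ℝ in atTop, (∫⁻ x, f x ^ p ∂μ) ^ (p - 1)⁻¹ < b := by
  have hlim : Tendsto (fun p : ℝ => (⨆ x, f x) * (∫⁻ x, f x ∂μ) ^ (p - 1)⁻¹) atTop
      (𝓝 (⨆ x, f x)) := by
    simpa using ENNReal.Tendsto.const_mul (tendsto_rpow_inv_sub_one_atTop h0 htop)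
      (Or.inr hb.ne_top)
  filter_upwards [hlim.eventually (gt_mem_nhds hb), eventually_gt_atTop 1] with p hp hp1
  have hq : 0 < p - 1 := sub_pos.2 hp1
  calc (∫⁻ x, f x ^ p ∂μ) ^ (p - 1)⁻¹
      ≤ ((⨆ x, f x) ^ (p - 1) * ∫⁻ x, f x ∂μ) ^ (p - 1)⁻¹ :=
        rpow_le_rpow (lintegral_rpow_le_iSup_rpow_mul hf hp1.le) (inv_nonneg.2 hq.le)
    _ = (⨆ x, f x) * (∫⁻ x, f x ∂μ) ^ (p - 1)⁻¹ := rpow_mul_rpow_inv hq _ _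
    _ < b := hp

theorem tendsto_lintegral_rpow_rpow_inv_sub_one_iSup [TopologicalSpace α] [μ.IsOpenPosMeasure]
    (hf : Measurable f) (hlsc : LowerSemicontinuous f) (h0 : ∫⁻ x, f x ∂μ ≠ 0)
    (htop : ∫⁻ x, f x ∂μ ≠ ⊤) :
    Tendsto (fun p : ℝ => (∫⁻ x, f x ^ p ∂μ) ^ (p - 1)⁻¹) atTop (𝓝 (⨆ x, f x)) :=
  tendsto_order.2 ⟨fun _ hb => eventually_lt_lintegral_rpow_rpow_inv_sub_one hf hlsc htop hb,
    fun _ hb => eventually_lintegral_rpow_rpow_inv_sub_one_lt hf h0 htop hb⟩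

end

lemma renyi_eq_neg_log_rpow (n : ℕ) (f : EuclideanSpace ℝ (Fin n) → ℝ≥0∞) (p : ℝ) :
    renyi n f p = -ENNReal.log ((∫⁻ x, f x ^ p) ^ (p - 1)⁻¹) := by
  rw [renyi, ENNReal.log_rpow, ← EReal.neg_mul, ← EReal.coe_neg, ← inv_neg, neg_sub]

/-- For an everywhere-defined lower semicontinuous probability density `f` on `ℝⁿ`,
`lim_{p→∞} h_p(f) = -log sup_x f(x)`. -/
theorem renyi_tendsto_top (n : ℕ) (f : EuclideanSpace ℝ (Fin n) → ℝ≥0∞)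
    (hf : IsDensity n f) (hlsc : LowerSemicontinuous f) :
    Tendsto (fun p : ℝ => renyi n f p) atTop (nhds (-ENNReal.log (⨆ x, f x))) := by
  obtain ⟨hmeas, hint⟩ := hf
  have hnorm := tendsto_lintegral_rpow_rpow_inv_sub_one_iSup (μ := volume) hmeas hlsc
    (by simp [hint]) (by simp [hint])
  exact ((continuous_log.tendsto _).comp hnorm).neg.congr fun p =>
    (renyi_eq_neg_log_rpow n f p).symm
end
end

section
/- For any random vector X in R^n with finite covariance matrix, and X* a random vector with density the spherically symmetric decreasing rearrangement of the density of X, one has E‖X*‖² ≤ E‖X − E[X]‖², i.e., tr Cov(X*) ≤ tr Cov(X). In particular, for n = 1, Var(X*) ≤ Var(X). -/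
open MeasureTheory Set Filter ENNReal

noncomputable section

/-! Write both `∫ f · w` and `∫ f* · w`, with `w x = ‖x‖²`, as integrals over `t > 0` of `∫ w` over
the level sets `{f > t}` and their rearrangements, the centered balls of the same volume. Since `w`
is radial and nondecreasing, among all sets of a given finite volume the centered ball minimizes
`∫ w` (bathtub principle), which compares the two layer by layer. Centering `X` first costs
nothing: level-set volumes, hence `f*`, are translation invariant. -/

section Layers

variable {α : Type*} [MeasurableSpace α] {μ : Measure α}

theorem setLIntegral_le_setLIntegral_of_measure_eq {A B : Set α} {w : α → ℝ≥0∞} {c : ℝ≥0∞}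
    (hA : MeasurableSet A) (hB : MeasurableSet B) (hAB : μ B = μ A) (hA_fin : μ A ≠ ⊤)
    (hle : ∀ x ∈ B, w x ≤ c) (hge : ∀ x ∉ B, c ≤ w x) :
    ∫⁻ x in B, w x ∂μ ≤ ∫⁻ x in A, w x ∂μ := by
  have hdiff : μ (B \ A) = μ (A \ B) := by
    have h := (measure_sdiff_add_inter B hA).trans (hAB.trans (measure_sdiff_add_inter A hB).symm)
    rw [inter_comm] at h
    exact (ENNReal.add_left_inj (measure_ne_top_of_subset inter_subset_left hA_fin)).1 h
  calc ∫⁻ x in B, w x ∂μ = ∫⁻ x in B ∩ A, w x ∂μ + ∫⁻ x in B \ A, w x ∂μ :=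
        (lintegral_inter_add_sdiff _ B hA).symm
    _ ≤ ∫⁻ x in A ∩ B, w x ∂μ + ∫⁻ x in B \ A, c ∂μ := by
        rw [inter_comm]
        exact add_le_add_right (setLIntegral_mono' (hB.diff hA) fun x hx => hle x hx.1) _
    _ = ∫⁻ x in A ∩ B, w x ∂μ + ∫⁻ x in A \ B, c ∂μ := by simp only [setLIntegral_const, hdiff]
    _ ≤ ∫⁻ x in A ∩ B, w x ∂μ + ∫⁻ x in A \ B, w x ∂μ :=
        add_le_add_right (setLIntegral_mono' (hA.diff hB) fun x hx => hge x hx.2) _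
    _ = ∫⁻ x in A, w x ∂μ := lintegral_inter_add_sdiff _ A hB

theorem lintegral_Ioi_indicator_ofReal_lt (a : ℝ≥0∞) :
    ∫⁻ t in Ioi (0 : ℝ), {t : ℝ | ENNReal.ofReal t < a}.indicator 1 t = a := by
  have hS : MeasurableSet {t : ℝ | ENNReal.ofReal t < a} :=
    measurableSet_lt ENNReal.measurable_ofReal measurable_const
  rw [lintegral_indicator_one hS, Measure.restrict_apply hS]
  rcases eq_or_ne a ⊤ with rfl | ha
  · simp
  · have h : {t : ℝ | ENNReal.ofReal t < a} ∩ Ioi 0 = Ioo 0 a.toReal := by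
      ext t
      simp only [mem_inter_iff, mem_ofPred_eq, mem_Ioi, mem_Ioo]
      exact ⟨fun h => ⟨h.2, (ENNReal.ofReal_lt_iff_lt_toReal h.2.le ha).1 h.1⟩,
        fun h => ⟨(ENNReal.ofReal_lt_iff_lt_toReal h.1.le ha).2 h.2, h.1⟩⟩
    rw [h, Real.volume_Ioo, sub_zero, ENNReal.ofReal_toReal ha]

theorem lintegral_lintegral_Ioi_indicator_mul [SFinite μ] {S : ℝ → Set α}
    (hS : MeasurableSet {p : α × ℝ | p.1 ∈ S p.2}) {w : α → ℝ≥0∞} (hw : Measurable w) :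
    ∫⁻ x, (∫⁻ t in Ioi (0 : ℝ), (S t).indicator 1 x) * w x ∂μ =
      ∫⁻ t in Ioi (0 : ℝ), ∫⁻ x in S t, w x ∂μ := by
  have hSt : ∀ t, MeasurableSet (S t) := fun t => measurable_prodMk_right hS
  have hSx : ∀ x, MeasurableSet {t | x ∈ S t} := fun x => measurable_prodMk_left hS
  calc ∫⁻ x, (∫⁻ t in Ioi (0 : ℝ), (S t).indicator 1 x) * w x ∂μ
      = ∫⁻ x, (∫⁻ t in Ioi (0 : ℝ), (S t).indicator w x) ∂μ := by
        refine lintegral_congr fun x => ?_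
        have hx : Measurable fun t => (S t).indicator (1 : α → ℝ≥0∞) x :=
          measurable_one.indicator (hSx x)
        rw [← lintegral_mul_const _ hx]
        exact lintegral_congr fun t => by by_cases h : x ∈ S t <;> simp [h]
    _ = ∫⁻ t in Ioi (0 : ℝ), ∫⁻ x, (S t).indicator w x ∂μ :=
        lintegral_lintegral_swap (f := fun x t => (S t).indicator w x)
          ((hw.comp measurable_fst).indicator hS).aemeasurable
    _ = ∫⁻ t in Ioi (0 : ℝ), ∫⁻ x in S t, w x ∂μ := by
        simp only [lintegral_indicator (hSt _)]

theorem lintegral_mul_eq_lintegral_setLIntegral_lt [SFinite μ] {f : α → ℝ≥0∞} (hf : Measurable f)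
    {w : α → ℝ≥0∞} (hw : Measurable w) :
    ∫⁻ x, f x * w x ∂μ = ∫⁻ t in Ioi (0 : ℝ), ∫⁻ x in {x | ENNReal.ofReal t < f x}, w x ∂μ := by
  rw [← lintegral_lintegral_Ioi_indicator_mul (S := fun t => {x | ENNReal.ofReal t < f x})
    (measurableSet_lt (by fun_prop) (hf.comp measurable_fst)) hw]
  exact lintegral_congr fun x => congrArg (· * w x) (lintegral_Ioi_indicator_ofReal_lt (f x)).symm

theorem measure_setOf_lt_ne_top {f : α → ℝ≥0∞} (hf : AEMeasurable f μ) (hf_fin : ∫⁻ x, f x ∂μ ≠ ⊤)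
    {ε : ℝ≥0∞} (hε : ε ≠ 0) : μ {x | ε < f x} ≠ ⊤ := by
  rcases eq_or_ne ε ⊤ with rfl | hε_top
  · simp
  refine ne_top_of_le_ne_top (ENNReal.div_ne_top hf_fin hε) ?_
  exact (measure_mono (ofPred_subset_ofPred.2 fun x hx => le_of_lt hx)).trans
    (meas_ge_le_lintegral_div hf hε hε_top)

end Layers


section Euclidean

variable {n : ℕ}

theorem volume_ball_lt_volume_ball_iff (hn : 0 < n) {r R : ℝ} (hr : 0 ≤ r) :
    volume (Metric.ball (0 : EuclideanSpace ℝ (Fin n)) r) <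
        volume (Metric.ball (0 : EuclideanSpace ℝ (Fin n)) R) ↔ r < R := by
  have : Nonempty (Fin n) := ⟨⟨0, hn⟩⟩
  simp only [EuclideanSpace.volume_ball, Fintype.card_fin]
  rw [ENNReal.mul_lt_mul_iff_left (by positivity) ofReal_ne_top,
    ENNReal.pow_lt_pow_left_iff hn.ne', ENNReal.ofReal_lt_ofReal_iff']
  exact ⟨fun h => h.1, fun h => ⟨h, hr.trans_lt h⟩⟩

theorem exists_volume_ball_eq (hn : 0 < n) {a : ℝ≥0∞} (ha : a ≠ ⊤) :
    ∃ R : ℝ, volume (Metric.ball (0 : EuclideanSpace ℝ (Fin n)) R) = a := by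
  have : Nonempty (Fin n) := ⟨⟨0, hn⟩⟩
  set κ : ℝ≥0∞ := volume (Metric.ball (0 : EuclideanSpace ℝ (Fin n)) 1)
  have hκ0 : κ ≠ 0 := (Metric.measure_ball_pos _ _ one_pos).ne'
  have hκ : κ ≠ ⊤ := measure_ball_lt_top.ne
  refine ⟨(a / κ).toReal ^ (n⁻¹ : ℝ), ?_⟩
  rw [Measure.addHaar_ball _ _ (by positivity), finrank_euclideanSpace_fin,
    Real.rpow_inv_natCast_pow ENNReal.toReal_nonneg hn.ne',
    ENNReal.ofReal_toReal (ENNReal.div_ne_top ha hκ0), ENNReal.div_mul_cancel hκ0 hκ]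

theorem ballRearrange_eq_ball (hn : 0 < n) {A : Set (EuclideanSpace ℝ (Fin n))}
    (hA : volume A ≠ ⊤) :
    ∃ R : ℝ, ballRearrange n A = Metric.ball 0 R ∧
      volume (Metric.ball (0 : EuclideanSpace ℝ (Fin n)) R) = volume A := by
  obtain ⟨R, hR⟩ := exists_volume_ball_eq hn hA
  refine ⟨R, ?_, hR⟩
  ext x
  rw [ballRearrange, mem_ofPred_eq, ← hR, volume_ball_lt_volume_ball_iff hn (norm_nonneg x),
    mem_ball_zero_iff]

theorem measurableSet_mem_ballRearrange_setOf_lt (f : EuclideanSpace ℝ (Fin n) → ℝ≥0∞) :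
    MeasurableSet {p : EuclideanSpace ℝ (Fin n) × ℝ |
      p.1 ∈ ballRearrange n {x | ENNReal.ofReal p.2 < f x}} := by
  have hball : Monotone fun r : ℝ => volume (Metric.ball (0 : EuclideanSpace ℝ (Fin n)) r) :=
    fun r s hrs => measure_mono (Metric.ball_subset_ball hrs)
  have hlevel : Antitone fun t : ℝ => volume {x | ENNReal.ofReal t < f x} :=
    fun s t hst => measure_mono fun x hx => (ENNReal.ofReal_le_ofReal hst).trans_lt hx
  exact measurableSet_lt (hball.measurable.comp measurable_fst.norm)
    (hlevel.measurable.comp measurable_snd)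

theorem symmRearr_comp_add_right (f : EuclideanSpace ℝ (Fin n) → ℝ≥0∞)
    (c : EuclideanSpace ℝ (Fin n)) : symmRearr n (fun x => f (x + c)) = symmRearr n f := by
  have h : ∀ t : ℝ,
      volume {x | ENNReal.ofReal t < f (x + c)} = volume {x | ENNReal.ofReal t < f x} := fun t =>
    measure_preimage_add_right volume c {x | ENNReal.ofReal t < f x}
  funext y
  simp only [symmRearr, ballRearrange, h]

theorem lintegral_symmRearr_mul_le (hn : 0 < n) {f : EuclideanSpace ℝ (Fin n) → ℝ≥0∞}
    (hf : Measurable f) (hf_fin : ∫⁻ x, f x ≠ ⊤) {φ : ℝ≥0∞ → ℝ≥0∞} (hφ : Monotone φ) :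
    ∫⁻ x, symmRearr n f x * φ ‖x‖ₑ ≤ ∫⁻ x, f x * φ ‖x‖ₑ := by
  have hw : Measurable fun x : EuclideanSpace ℝ (Fin n) => φ ‖x‖ₑ :=
    hφ.measurable.comp measurable_enorm
  rw [lintegral_mul_eq_lintegral_setLIntegral_lt hf hw]
  refine (lintegral_lintegral_Ioi_indicator_mul
    (measurableSet_mem_ballRearrange_setOf_lt f) hw).trans_le ?_
  refine setLIntegral_mono' measurableSet_Ioi fun t ht => ?_
  have hlevel_fin : volume {x | ENNReal.ofReal t < f x} ≠ ⊤ :=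
    measure_setOf_lt_ne_top hf.aemeasurable hf_fin (ENNReal.ofReal_pos.2 ht).ne'
  obtain ⟨R, hBR, hvol⟩ := ballRearrange_eq_ball hn hlevel_fin
  rw [hBR]
  refine setLIntegral_le_setLIntegral_of_measure_eq (c := φ (ENNReal.ofReal R))
    (measurableSet_lt measurable_const hf) measurableSet_ball hvol hlevel_fin
    (fun x hx => hφ ?_) (fun x hx => hφ ?_) <;> rw [← ofReal_norm]
  · exact ENNReal.ofReal_le_ofReal (mem_ball_zero_iff.1 hx).le
  · exact ENNReal.ofReal_le_ofReal (not_lt.1 (mt mem_ball_zero_iff.2 hx))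

end Euclidean

theorem secondMoment_symmRearr_general (n : ℕ) (f : EuclideanSpace ℝ (Fin n) → ℝ≥0∞)
    (hf : IsDensity n f) :
    ∫⁻ x, symmRearr n f x * ENNReal.ofReal (‖x‖ ^ 2) ≤
      ∫⁻ x, f x * ENNReal.ofReal (‖x - (∫ y, (f y).toReal • y)‖ ^ 2) := by
  rcases Nat.eq_zero_or_pos n with rfl | hn
  · simp [Subsingleton.elim _ (0 : EuclideanSpace ℝ (Fin 0))]
  set c := ∫ y, (f y).toReal • y
  have hsq : ∀ x : EuclideanSpace ℝ (Fin n), ENNReal.ofReal (‖x‖ ^ 2) = ‖x‖ₑ ^ 2 := fun x => by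
    rw [ENNReal.ofReal_pow (norm_nonneg x), ofReal_norm]
  have hfc_fin : ∫⁻ x, f (x + c) ≠ ⊤ := by
    rw [lintegral_add_right_eq_self f c, hf.2]
    exact one_ne_top
  calc ∫⁻ x, symmRearr n f x * ENNReal.ofReal (‖x‖ ^ 2)
      = ∫⁻ x, symmRearr n (fun x => f (x + c)) x * ‖x‖ₑ ^ 2 := by
        simp only [symmRearr_comp_add_right, hsq]
    _ ≤ ∫⁻ x, f (x + c) * ‖x‖ₑ ^ 2 :=
        lintegral_symmRearr_mul_le hn (hf.1.comp (measurable_add_const c)) hfc_fin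
          (pow_left_mono 2)
    _ = ∫⁻ x, f x * ENNReal.ofReal (‖x - c‖ ^ 2) := by
        rw [← lintegral_add_right_eq_self (fun x => f x * ENNReal.ofReal (‖x - c‖ ^ 2)) c]
        simp only [add_sub_cancel_right, hsq]

/-- For a random vector `X` on `ℝⁿ` with density `f` and finite second moment,
`E‖X*‖² ≤ E‖X − E[X]‖²`, i.e. `tr Cov(X*) ≤ tr Cov(X)`, where `X*` has density
the spherically symmetric decreasing rearrangement `f*`. -/
theorem secondMoment_symmRearr (n : ℕ) (f : EuclideanSpace ℝ (Fin n) → ℝ≥0∞)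
    (hf : IsDensity n f) (hmom : (∫⁻ x, f x * ENNReal.ofReal (‖x‖ ^ 2)) ≠ ⊤) :
    ∫⁻ x, symmRearr n f x * ENNReal.ofReal (‖x‖ ^ 2) ≤
      ∫⁻ x, f x * ENNReal.ofReal (‖x - (∫ y, (f y).toReal • y)‖ ^ 2) :=
  secondMoment_symmRearr_general n f hf
end
end

section
/- Let X and Y be independent uniform random variables on Borel subsets M_1, M_2 of the real line with 0 < |M_1| < |M_2| < ∞. Then h(X + Y) ≥ log|M_2| + |M_1|/(2|M_2|) ≥ log(|M_2| + |M_1|/2). -/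
open MeasureTheory Set Filter ENNReal

noncomputable section

/-- Convolution of two `ℝ≥0∞`-valued functions on `ℝ`. -/
def conv2R (f g : ℝ → ℝ≥0∞) : ℝ → ℝ≥0∞ :=
  fun x => ∫⁻ y, f y * g (x - y)

/-- The Shannon differential entropy `h(f) = -∫ f log f` of a density on `ℝ`,
as an extended real number. -/
def entropyR (f : ℝ → ℝ≥0∞) : EReal :=
  ((∫⁻ x, ENNReal.ofReal (-((f x).toReal * Real.log (f x).toReal))) : EReal) -
    ((∫⁻ x, ENNReal.ofReal ((f x).toReal * Real.log (f x).toReal)) : EReal)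

/-- The uniform density on a set `M ⊆ ℝ`. -/
def unifDens (M : Set ℝ) : ℝ → ℝ≥0∞ :=
  fun x => (volume M)⁻¹ * M.indicator 1 x

/-!
Let `K x = |M₁ ∩ (x - M₂)|`, `a = |M₁|` and `b = |M₂|`. The density of `X + Y` is
`K / (a b) ≤ 1 / b`, so `h(X + Y) = log b + (a b)⁻¹ ∫ K log (a / K)`, and by Fubini
`∫ K g = ∫∫_{M₁ × M₂} g (y + z)`. With `Gᵢ y = |Mᵢ ∩ (-∞, y]|`, the overlap `K (y + z)` is at
most `G₁ y + G₂ z` and at most `(a - G₁ y) + (b - G₂ z)`, the same quantities for the intervals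
`(0, a]`, `(0, b]` at the points `G₁ y`, `G₂ z`. Since `Gᵢ` pushes Lebesgue measure on `Mᵢ`
forward to Lebesgue measure on `(0, |Mᵢ|]`, the integral `∫ K log (a / K)` is at least its value
for these intervals, and the two corner triangles of their trapezoidal overlap already contribute
`a² / 4` each. The second inequality is `log (1 + t) ≤ t`.
-/

open scoped Topology

theorem Real.log_add_le_log_add_div {b c : ℝ} (hb : 0 < b) (hbc : 0 < b + c) :
    Real.log (b + c) ≤ Real.log b + c / b := by
  have h : b + c = b * (1 + c / b) := by field_simp
  have hpos : 0 < 1 + c / b := by rw [h] at hbc; exact pos_of_mul_pos_right hbc hb.le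
  rw [h, Real.log_mul hb.ne' hpos.ne']
  linarith [Real.log_le_sub_one_of_pos hpos]

theorem integral_mul_log {a : ℝ} (ha : 0 ≤ a) :
    ∫ s in (0 : ℝ)..a, s * Real.log s = a ^ 2 / 2 * Real.log a - a ^ 2 / 4 := by
  have hderiv : ∀ s ∈ Ioo 0 a,
      HasDerivAt (fun s : ℝ => s ^ 2 / 2 * Real.log s - s ^ 2 / 4) (s * Real.log s) s := by
    intro s hs
    refine ((((hasDerivAt_pow 2 s).div_const 2).mul (Real.hasDerivAt_log hs.1.ne')).sub
      ((hasDerivAt_pow 2 s).div_const 4)).congr_deriv ?_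
    field_simp
    ring
  have hcont : ContinuousOn (fun s : ℝ => s ^ 2 / 2 * Real.log s - s ^ 2 / 4) (Icc 0 a) := by
    have h : (fun s : ℝ => s ^ 2 / 2 * Real.log s - s ^ 2 / 4) =
        fun s => s * (s * Real.log s) / 2 - s ^ 2 / 4 := by
      ext s; ring
    rw [h]
    fun_prop
  rw [intervalIntegral.integral_eq_sub_of_hasDerivAt_of_le ha hcont hderiv
    (Real.continuous_mul_log.intervalIntegrable 0 a)]
  simp

theorem integral_log_div {a c : ℝ} (hc : 0 < c) (hca : c ≤ a) :
    ∫ u in c..a, Real.log (a / u) = c * Real.log c - c * Real.log a + (a - c) := by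
  have hpos : ∀ u ∈ uIcc c a, 0 < u := fun u hu => hc.trans_le (uIcc_of_le hca ▸ hu).1
  rw [intervalIntegral.integral_congr fun u hu =>
      Real.log_div (hc.trans_le hca).ne' (hpos u hu).ne',
    intervalIntegral.integral_sub intervalIntegrable_const
      (Real.continuousOn_log.mono fun u hu => (hpos u hu).ne').intervalIntegrable,
    intervalIntegral.integral_const, integral_log, smul_eq_mul]
  ring

theorem integral_mul_log_sub_mul_log_add_sub {a : ℝ} (ha : 0 < a) :
    ∫ s in (0 : ℝ)..a, (s * Real.log s - s * Real.log a + (a - s)) = a ^ 2 / 4 := by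
  have h₁ : IntervalIntegrable (fun s : ℝ => s * Real.log s) volume 0 a :=
    Real.continuous_mul_log.intervalIntegrable 0 a
  have h₂ : IntervalIntegrable (fun s : ℝ => s * Real.log a) volume 0 a :=
    (continuous_id.mul continuous_const).intervalIntegrable 0 a
  have h₃ : IntervalIntegrable (fun s : ℝ => a - s) volume 0 a :=
    (continuous_const.sub continuous_id).intervalIntegrable 0 a
  rw [intervalIntegral.integral_add (h₁.sub h₂) h₃, intervalIntegral.integral_sub h₁ h₂,
    intervalIntegral.integral_sub intervalIntegrable_const intervalIntegral.intervalIntegrable_id,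
    integral_mul_log ha.le, intervalIntegral.integral_mul_const, integral_id,
    intervalIntegral.integral_const, smul_eq_mul]
  ring

theorem ofReal_log_div_add_ofReal_log_div_le {a k u v : ℝ} (ha : 0 < a) (hk : 0 < k)
    (hku : k ≤ u) (hkv : k ≤ v) (huv : 2 * a ≤ u + v) :
    ENNReal.ofReal (Real.log (a / u)) + ENNReal.ofReal (Real.log (a / v)) ≤
      ENNReal.ofReal (Real.log (a / k)) := by
  -- One of `u`, `v` is at least `a`, and its term vanishes.
  have key : ∀ u v, a ≤ u → k ≤ v → ENNReal.ofReal (Real.log (a / u)) +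
      ENNReal.ofReal (Real.log (a / v)) ≤ ENNReal.ofReal (Real.log (a / k)) := by
    intro u v hau hkv
    rw [ENNReal.ofReal_eq_zero.2 (Real.log_nonpos (div_nonneg ha.le (ha.le.trans hau))
      ((div_le_one (ha.trans_le hau)).2 hau)), zero_add]
    exact ENNReal.ofReal_le_ofReal (Real.log_le_log (div_pos ha (hk.trans_le hkv))
      (div_le_div_of_nonneg_left ha.le hk hkv))
  rcases le_total a u with hau | hua
  · exact key u v hau hkv
  · rw [add_comm]
    exact key v u (by linarith) hku

theorem setLIntegral_Ioc_comp_sub_left (g : ℝ → ℝ≥0∞) (a : ℝ) :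
    ∫⁻ s in Ioc 0 a, g (a - s) = ∫⁻ s in Ioc 0 a, g s := by
  have hpre : (fun s => a - s) ⁻¹' Ioc 0 a = Ico 0 a := by
    ext s
    simp only [mem_preimage, mem_Ioc, mem_Ico]
    constructor <;> rintro ⟨h₁, h₂⟩ <;> constructor <;> linarith
  have := (Measure.measurePreserving_sub_left volume a).setLIntegral_comp_preimage_emb
    (MeasurableEquiv.subLeft a).measurableEmbedding g (Ioc 0 a)
  rw [← this, hpre, Measure.restrict_congr_set Ico_ae_eq_Ioc]

theorem lintegral_Ioc_ofReal_log_div_add {a b s : ℝ} (hs : 0 < s) (hsa : s ≤ a) (hab : a ≤ b) :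
    ∫⁻ t in Ioc 0 b, ENNReal.ofReal (Real.log (a / (s + t))) =
      ENNReal.ofReal (s * Real.log s - s * Real.log a + (a - s)) := by
  have hpos : ∀ t ∈ Icc 0 (a - s), 0 < s + t := fun t ht => by linarith [ht.1]
  have hzero : ∀ t ∈ Ioc (a - s) b, ENNReal.ofReal (Real.log (a / (s + t))) = 0 := by
    intro t ht
    have hst : a < s + t := by linarith [ht.1]
    refine ENNReal.ofReal_eq_zero.2 (Real.log_nonpos (div_nonneg (by linarith) (by linarith)) ?_)
    rw [div_le_one (by linarith)]
    exact hst.le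
  have hnonneg : ∀ t ∈ Ioc 0 (a - s), 0 ≤ Real.log (a / (s + t)) := by
    intro t ht
    refine Real.log_nonneg ?_
    rw [le_div_iff₀ (hpos t (Ioc_subset_Icc_self ht)), one_mul]
    linarith [ht.2]
  have hint : IntegrableOn (fun t => Real.log (a / (s + t))) (Ioc 0 (a - s)) := by
    refine (ContinuousOn.integrableOn_Icc ?_).mono_set Ioc_subset_Icc_self
    exact (continuousOn_const.div (continuousOn_const.add continuousOn_id)
      fun t ht => (hpos t ht).ne').log fun t ht => (div_pos (hs.trans_le hsa) (hpos t ht)).ne'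
  rw [← Ioc_union_Ioc_eq_Ioc (by linarith) (by linarith : a - s ≤ b),
    lintegral_union measurableSet_Ioc (Ioc_disjoint_Ioc_of_le le_rfl),
    setLIntegral_congr_fun measurableSet_Ioc hzero, lintegral_zero, add_zero,
    ← ofReal_integral_eq_lintegral_ofReal hint
      ((ae_restrict_iff' measurableSet_Ioc).2 (ae_of_all _ hnonneg)),
    ← intervalIntegral.integral_of_le (by linarith),
    intervalIntegral.integral_comp_add_left (fun u => Real.log (a / u)), add_zero,
    add_sub_cancel, integral_log_div hs hsa]

theorem lintegral_Ioc_Ioc_ofReal_log_div_add {a b : ℝ} (ha : 0 < a) (hab : a ≤ b) :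
    ∫⁻ s in Ioc 0 a, ∫⁻ t in Ioc 0 b, ENNReal.ofReal (Real.log (a / (s + t))) =
      ENNReal.ofReal (a ^ 2 / 4) := by
  have hnonneg : ∀ s ∈ Ioc 0 a, 0 ≤ s * Real.log s - s * Real.log a + (a - s) := by
    intro s hs
    have h := mul_le_mul_of_nonneg_left (Real.log_le_sub_one_of_pos (div_pos ha hs.1)) hs.1.le
    rw [Real.log_div ha.ne' hs.1.ne', mul_sub_one, mul_div_cancel₀ _ hs.1.ne'] at h
    linarith
  have hint : IntegrableOn (fun s => s * Real.log s - s * Real.log a + (a - s)) (Ioc 0 a) :=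
    (Continuous.integrableOn_Ioc (by fun_prop))
  rw [setLIntegral_congr_fun measurableSet_Ioc
      fun s hs => lintegral_Ioc_ofReal_log_div_add hs.1 hs.2 hab,
    ← ofReal_integral_eq_lintegral_ofReal hint
      ((ae_restrict_iff' measurableSet_Ioc).2 (ae_of_all _ hnonneg)),
    ← intervalIntegral.integral_of_le ha.le, integral_mul_log_sub_mul_log_add_sub ha]

theorem lintegral_Ioc_Ioc_ofReal_log_div_sub_add_sub {a b : ℝ} (ha : 0 < a) (hab : a ≤ b) :
    ∫⁻ s in Ioc 0 a, ∫⁻ t in Ioc 0 b, ENNReal.ofReal (Real.log (a / ((a - s) + (b - t)))) =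
      ENNReal.ofReal (a ^ 2 / 4) := by
  calc _ = ∫⁻ s in Ioc 0 a, ∫⁻ t in Ioc 0 b, ENNReal.ofReal (Real.log (a / ((a - s) + t))) :=
        lintegral_congr fun s =>
          setLIntegral_Ioc_comp_sub_left (fun t => ENNReal.ofReal (Real.log (a / ((a - s) + t)))) b
    _ = ∫⁻ s in Ioc 0 a, ∫⁻ t in Ioc 0 b, ENNReal.ofReal (Real.log (a / (s + t))) :=
        setLIntegral_Ioc_comp_sub_left
          (fun s => ∫⁻ t in Ioc 0 b, ENNReal.ofReal (Real.log (a / (s + t)))) a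
    _ = _ := lintegral_Ioc_Ioc_ofReal_log_div_add ha hab

/- For the intervals `(0, a]`, `(0, b]` the overlap at `s + t` is
`min (min (s + t) ((a - s) + (b - t))) a`; the two terms are `log (a / ·)` of it on the two
corner triangles where it is below `a`. -/
theorem lintegral_Ioc_prod_Ioc_ofReal_log_div_corners {a b : ℝ} (ha : 0 < a) (hab : a ≤ b) :
    ∫⁻ q, (ENNReal.ofReal (Real.log (a / (q.1 + q.2))) +
        ENNReal.ofReal (Real.log (a / ((a - q.1) + (b - q.2)))))
      ∂(volume.restrict (Ioc 0 a)).prod (volume.restrict (Ioc 0 b)) =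
      ENNReal.ofReal (a ^ 2 / 2) := by
  rw [lintegral_add_left (by fun_prop), lintegral_prod _ (by fun_prop),
    lintegral_prod _ (by fun_prop), lintegral_Ioc_Ioc_ofReal_log_div_add ha hab,
    lintegral_Ioc_Ioc_ofReal_log_div_sub_add_sub ha hab, ← ENNReal.ofReal_add (by positivity)
      (by positivity)]
  ring_nf

section DistributionFunction

variable {μ : Measure ℝ} [IsFiniteMeasure μ]

theorem monotone_measureReal_Iic : Monotone fun y => μ.real (Iic y) :=
  fun _ _ h => measureReal_mono (Iic_subset_Iic.2 h)

theorem tendsto_measureReal_Iic_atBot : Tendsto (fun y => μ.real (Iic y)) atBot (𝓝 0) := by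
  have h := tendsto_measure_iInter_atBot (μ := μ) (fun y => measurableSet_Iic.nullMeasurableSet)
    (monotone_Iic (α := ℝ)) ⟨0, measure_ne_top μ _⟩
  rw [iInter_Iic_eq_empty_iff.2 (by simp), measure_empty] at h
  exact (ENNReal.tendsto_toReal ENNReal.zero_ne_top).comp h

theorem tendsto_measureReal_Iic_atTop :
    Tendsto (fun y => μ.real (Iic y)) atTop (𝓝 (μ.real univ)) :=
  (ENNReal.tendsto_toReal (measure_ne_top μ _)).comp (tendsto_measure_Iic_atTop μ)

theorem measureReal_univ_sub_measureReal_Iic (x : ℝ) :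
    μ.real univ - μ.real (Iic x) = μ.real (Ioi x) := by
  rw [← compl_Iic, measureReal_compl measurableSet_Iic]

theorem lipschitzWith_measureReal_Iic (hμ : μ ≤ volume) :
    LipschitzWith 1 fun y => μ.real (Iic y) := by
  refine LipschitzWith.of_le_add_mul 1 fun x y => ?_
  have hIoc : μ.real (Ioc y x) ≤ dist x y := calc
    μ.real (Ioc y x) ≤ volume.real (Ioc y x) :=
      ENNReal.toReal_mono measure_Ioc_lt_top.ne (hμ _)
    _ ≤ dist x y := by
      rw [Real.volume_real_Ioc, Real.dist_eq]
      exact max_le (le_abs_self _) (abs_nonneg _)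
  calc μ.real (Iic x) ≤ μ.real (Iic y ∪ Ioc y x) := measureReal_mono Iic_subset_Iic_union_Ioc
    _ ≤ μ.real (Iic y) + μ.real (Ioc y x) := measureReal_union_le _ _
    _ ≤ μ.real (Iic y) + 1 * dist x y := by rw [one_mul]; gcongr

variable (hcont : Continuous fun y => μ.real (Iic y))
include hcont

theorem measureReal_preimage_measureReal_Iic {c : ℝ} (hc : 0 ≤ c) (hca : c < μ.real univ) :
    μ.real ((fun y => μ.real (Iic y)) ⁻¹' Iic c) = c := by
  set F := fun y => μ.real (Iic y)
  obtain ⟨y₁, hy₁⟩ := ((tendsto_measureReal_Iic_atTop (μ := μ)).eventually_const_lt hca).exists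
  apply le_antisymm
  · rcases (F ⁻¹' Iic c).eq_empty_or_nonempty with hT | hT
    · rw [hT, measureReal_empty]
      exact hc
    have hbdd : BddAbove (F ⁻¹' Iic c) := ⟨y₁, fun t ht => by
      by_contra! hlt
      exact (hy₁.trans_le (monotone_measureReal_Iic hlt.le)).not_ge ht⟩
    have hmem := (isClosed_Iic.preimage hcont).csSup_mem hT hbdd
    calc μ.real (F ⁻¹' Iic c) ≤ F (sSup (F ⁻¹' Iic c)) :=
          measureReal_mono fun t ht => le_csSup hbdd ht
      _ ≤ c := hmem
  · rcases hc.eq_or_lt with rfl | hc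
    · exact measureReal_nonneg
    obtain ⟨y₀, hy₀⟩ := ((tendsto_measureReal_Iic_atBot (μ := μ)).eventually_le_const hc).exists
    obtain ⟨y, hy⟩ := intermediate_value_univ y₀ y₁ hcont ⟨hy₀, hy₁.le⟩
    calc c = F y := hy.symm
      _ ≤ μ.real (F ⁻¹' Iic c) :=
          measureReal_mono fun t ht => (monotone_measureReal_Iic (mem_Iic.1 ht)).trans hy.le

theorem map_measureReal_Iic :
    μ.map (fun y => μ.real (Iic y)) = volume.restrict (Ioc 0 (μ.real univ)) := by
  set F := fun y => μ.real (Iic y)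
  refine Measure.ext_of_Iic _ _ fun c => ?_
  rw [Measure.map_apply hcont.measurable measurableSet_Iic,
    Measure.restrict_apply measurableSet_Iic, inter_comm, Ioc_inter_Iic, Real.volume_Ioc,
    sub_zero]
  rcases lt_or_ge c 0 with hc | hc
  · have hT : F ⁻¹' Iic c = ∅ := eq_empty_of_forall_notMem fun y hy =>
      (hc.trans_le measureReal_nonneg).not_ge hy
    rw [hT, measure_empty, ENNReal.ofReal_eq_zero.2 ((min_le_right _ _).trans hc.le)]
  rcases lt_or_ge c (μ.real univ) with hca | hca
  · rw [min_eq_right hca.le, ← ofReal_measureReal (s := F ⁻¹' Iic c),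
      measureReal_preimage_measureReal_Iic hcont hc hca]
  · have hT : F ⁻¹' Iic c = univ :=
      eq_univ_of_forall fun y => (measureReal_mono (subset_univ _)).trans hca
    rw [hT, min_eq_left hca, ofReal_measureReal]

end DistributionFunction

theorem lintegral_prod_restrict_comp_measureReal_Iic {M₁ M₂ : Set ℝ} (hfin₁ : volume M₁ ≠ ⊤)
    (hfin₂ : volume M₂ ≠ ⊤) {g : ℝ × ℝ → ℝ≥0∞} (hg : Measurable g) :
    ∫⁻ p, g ((volume.restrict M₁).real (Iic p.1), (volume.restrict M₂).real (Iic p.2))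
        ∂(volume.restrict M₁).prod (volume.restrict M₂) =
      ∫⁻ q, g q ∂(volume.restrict (Ioc 0 (volume.real M₁))).prod
        (volume.restrict (Ioc 0 (volume.real M₂))) := by
  have : IsFiniteMeasure (volume.restrict M₁) := isFiniteMeasure_restrict.2 hfin₁
  have : IsFiniteMeasure (volume.restrict M₂) := isFiniteMeasure_restrict.2 hfin₂
  have hG₁ := (lipschitzWith_measureReal_Iic (μ := volume.restrict M₁)
    Measure.restrict_le_self).continuous
  have hG₂ := (lipschitzWith_measureReal_Iic (μ := volume.restrict M₂)
    Measure.restrict_le_self).continuous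
  rw [← measureReal_restrict_apply_univ (μ := volume) M₁,
    ← measureReal_restrict_apply_univ (μ := volume) M₂, ← map_measureReal_Iic hG₁,
    ← map_measureReal_Iic hG₂, Measure.map_prod_map _ _ hG₁.measurable hG₂.measurable,
    lintegral_map hg (hG₁.measurable.prodMap hG₂.measurable)]
  rfl

theorem MeasureTheory.integrable_of_lintegral_ofReal_ne_top {α : Type*} [MeasurableSpace α]
    {μ : Measure α} {φ : α → ℝ} (hφ : AEMeasurable φ μ)
    (hpos : ∫⁻ x, ENNReal.ofReal (φ x) ∂μ ≠ ⊤) (hneg : ∫⁻ x, ENNReal.ofReal (-φ x) ∂μ ≠ ⊤) :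
    Integrable φ μ := by
  refine ((integrable_toReal_of_lintegral_ne_top hφ.ennreal_ofReal hpos).sub
    (integrable_toReal_of_lintegral_ne_top hφ.neg.ennreal_ofReal hneg)).congr
    (ae_of_all _ fun x => ?_)
  simp only [Pi.sub_apply, Pi.neg_apply, ENNReal.toReal_ofReal',
    max_zero_sub_max_neg_zero_eq_self]

section Entropy

variable {f : ℝ → ℝ≥0∞}

theorem lintegral_ofReal_mul_log_ne_top (hf : ∫⁻ x, f x ≠ ⊤) {C : ℝ}
    (hC : ∀ x, (f x).toReal ≤ C) :
    ∫⁻ x, ENNReal.ofReal ((f x).toReal * Real.log (f x).toReal) ≠ ⊤ := by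
  have hle : ∀ x, ENNReal.ofReal ((f x).toReal * Real.log (f x).toReal) ≤
      ENNReal.ofReal (max (Real.log C) 0) * f x := fun x => by
    rcases ENNReal.toReal_nonneg.eq_or_lt with h | h
    · rw [← h, zero_mul, ENNReal.ofReal_zero]
      exact zero_le
    calc ENNReal.ofReal ((f x).toReal * Real.log (f x).toReal)
        ≤ ENNReal.ofReal ((f x).toReal * max (Real.log C) 0) :=
          ENNReal.ofReal_le_ofReal (mul_le_mul_of_nonneg_left
            ((Real.log_le_log h (hC x)).trans (le_max_left _ _)) h.le)
      _ ≤ ENNReal.ofReal (max (Real.log C) 0) * f x := by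
          rw [ENNReal.ofReal_mul h.le, mul_comm]
          exact mul_le_mul_right ENNReal.ofReal_toReal_le _
  refine ne_top_of_le_ne_top ?_ (lintegral_mono hle)
  rw [lintegral_const_mul' _ _ ENNReal.ofReal_ne_top]
  exact ENNReal.mul_ne_top ENNReal.ofReal_ne_top hf

theorem entropyR_eq_neg_integral (hφ : Integrable fun x => (f x).toReal * Real.log (f x).toReal) :
    entropyR f = ((-∫ x, (f x).toReal * Real.log (f x).toReal : ℝ) : EReal) := by
  rw [entropyR, integral_eq_lintegral_pos_part_sub_lintegral_neg_part hφ, neg_sub, EReal.coe_sub,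
    EReal.coe_ennreal_toReal hφ.lintegral_lt_top.ne]
  exact congrArg (· - _) (EReal.coe_ennreal_toReal hφ.neg.lintegral_lt_top.ne).symm

theorem le_entropyR_of_le_inv {b c : ℝ} (hb : 0 < b) (hf : Measurable f)
    (hf1 : ∫⁻ x, f x = 1) (hfb : ∀ x, (f x).toReal ≤ b⁻¹)
    (hc : ENNReal.ofReal c ≤
      ∫⁻ x, ENNReal.ofReal ((f x).toReal * Real.log (b⁻¹ / (f x).toReal))) :
    ((Real.log b + c : ℝ) : EReal) ≤ entropyR f := by
  have hf1' : ∫⁻ x, f x ≠ ⊤ := hf1 ▸ ENNReal.one_ne_top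
  have hB := lintegral_ofReal_mul_log_ne_top hf1' hfb
  by_cases hA : ∫⁻ x, ENNReal.ofReal (-((f x).toReal * Real.log (f x).toReal)) = ⊤
  · rw [entropyR, hA, EReal.coe_ennreal_top, EReal.top_sub (by simpa using hB)]
    exact le_top
  set F := fun x => (f x).toReal
  have hφ : Integrable fun x => F x * Real.log (F x) :=
    integrable_of_lintegral_ofReal_ne_top (by fun_prop) hB hA
  have hF : Integrable F := integrable_toReal_of_lintegral_ne_top hf.aemeasurable hf1'
  have hF1 : ∫ x, F x = 1 := by
    rw [integral_toReal hf.aemeasurable (ae_lt_top hf hf1'), hf1, ENNReal.toReal_one]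
  set ψ := fun x => F x * Real.log (b⁻¹ / F x)
  have hψ_eq : ∀ x, ψ x = -(F x * Real.log (F x)) - F x * Real.log b := fun x => by
    by_cases hx : F x = 0
    · simp [ψ, hx]
    · simp only [ψ]
      rw [Real.log_div (inv_ne_zero hb.ne') hx, Real.log_inv]
      ring
  have hψ_nonneg : ∀ x, 0 ≤ ψ x := fun x => by
    rcases (ENNReal.toReal_nonneg (a := f x)).eq_or_lt with hx | hx
    · simp [ψ, F, ← hx]
    · exact mul_nonneg hx.le (Real.log_nonneg ((one_le_div hx).2 (hfb x)))
  have hψ : Integrable ψ :=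
    (hφ.neg.sub (hF.mul_const _)).congr (ae_of_all _ fun x => (hψ_eq x).symm)
  have hψc : c ≤ ∫ x, ψ x := by
    rwa [← ENNReal.ofReal_le_ofReal_iff (integral_nonneg hψ_nonneg),
      ofReal_integral_eq_lintegral_ofReal hψ (ae_of_all _ hψ_nonneg)]
  rw [entropyR_eq_neg_integral hφ, EReal.coe_le_coe_iff]
  calc Real.log b + c ≤ Real.log b + ∫ x, ψ x := by linarith
    _ = -∫ x, F x * Real.log (F x) := by
      rw [integral_congr_ae (ae_of_all _ hψ_eq),
        integral_sub (f := fun x => -(F x * Real.log (F x))) hφ.neg (hF.mul_const _),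
        integral_neg, integral_mul_const, hF1]
      ring

end Entropy

section Convolution

variable {f g : ℝ → ℝ≥0∞}

theorem measurable_conv2R (hf : Measurable f) (hg : Measurable g) : Measurable (conv2R f g) :=
  Measurable.lintegral_prod_right' (f := fun p : ℝ × ℝ => f p.2 * g (p.1 - p.2)) (by fun_prop)

theorem conv2R_const_mul (hf : Measurable f) (hg : Measurable g) (c d : ℝ≥0∞) (x : ℝ) :
    conv2R (fun y => c * f y) (fun y => d * g y) x = c * d * conv2R f g x := by
  rw [conv2R, conv2R, ← lintegral_const_mul _ (by fun_prop)]
  congr with y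
  ring

theorem lintegral_conv2R_mul {h : ℝ → ℝ≥0∞} (hf : Measurable f) (hg : Measurable g)
    (hh : Measurable h) :
    ∫⁻ x, conv2R f g x * h x =
      ∫⁻ p, h (p.1 + p.2) ∂(volume.withDensity f).prod (volume.withDensity g) := by
  calc ∫⁻ x, conv2R f g x * h x = ∫⁻ x, ∫⁻ y, f y * g (x - y) * h x :=
        lintegral_congr fun x => (lintegral_mul_const _ (by fun_prop)).symm
    _ = ∫⁻ y, ∫⁻ x, f y * g (x - y) * h x := lintegral_lintegral_swap (by fun_prop)
    _ = ∫⁻ y, f y * ∫⁻ z, g z * h (y + z) := by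
        refine lintegral_congr fun y => ?_
        rw [← lintegral_const_mul _ (by fun_prop),
          ← lintegral_add_left_eq_self (fun x => f y * g (x - y) * h x) y]
        simp only [add_sub_cancel_left, mul_assoc]
    _ = _ := by
        rw [lintegral_prod _ (by fun_prop),
          lintegral_withDensity_eq_lintegral_mul _ hf (by fun_prop)]
        refine lintegral_congr fun y => ?_
        rw [Pi.mul_apply, lintegral_withDensity_eq_lintegral_mul _ hg (by fun_prop)]
        rfl

theorem lintegral_conv2R (hf : Measurable f) (hg : Measurable g) :
    ∫⁻ x, conv2R f g x = (∫⁻ x, f x) * ∫⁻ x, g x := by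
  have h := lintegral_conv2R_mul hf hg measurable_const (h := 1)
  simp only [Pi.one_apply, mul_one, lintegral_one] at h
  rw [h, ← univ_prod_univ, Measure.prod_prod, withDensity_apply _ MeasurableSet.univ,
    withDensity_apply _ MeasurableSet.univ, setLIntegral_univ, setLIntegral_univ]

end Convolution

section Indicators

variable {M₁ M₂ : Set ℝ}

theorem conv2R_indicator_one_eq (h₁ : MeasurableSet M₁) (h₂ : MeasurableSet M₂) (x : ℝ) :
    conv2R (M₁.indicator 1) (M₂.indicator 1) x = volume (M₁ ∩ (fun w => x - w) ⁻¹' M₂) := by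
  rw [← lintegral_indicator_one (h₁.inter (h₂.preimage (by fun_prop))), conv2R,
    inter_indicator_one]
  rfl

theorem conv2R_indicator_one_le (h₁ : MeasurableSet M₁) (h₂ : MeasurableSet M₂) (x : ℝ) :
    conv2R (M₁.indicator 1) (M₂.indicator 1) x ≤ volume M₁ := by
  rw [conv2R_indicator_one_eq h₁ h₂]
  exact measure_mono inter_subset_left

theorem conv2R_indicator_one_add_le (h₁ : MeasurableSet M₁) (h₂ : MeasurableSet M₂) {y z : ℝ}
    {S₁ S₂ : Set ℝ} (hS : ∀ w, w ∉ S₁ → y + z - w ∈ S₂) :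
    conv2R (M₁.indicator 1) (M₂.indicator 1) (y + z) ≤
      volume.restrict M₁ S₁ + volume.restrict M₂ S₂ := by
  have hsub : M₁ ∩ (fun w => y + z - w) ⁻¹' M₂ ⊆
      (S₁ ∩ M₁) ∪ MeasurableEquiv.subLeft (y + z) ⁻¹' (S₂ ∩ M₂) := fun w hw => by
    by_cases hw₁ : w ∈ S₁
    · exact Or.inl ⟨hw₁, hw.1⟩
    · exact Or.inr ⟨hS w hw₁, hw.2⟩
  have hpres : MeasurePreserving (MeasurableEquiv.subLeft (y + z)) volume volume :=
    Measure.measurePreserving_sub_left volume (y + z)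
  rw [conv2R_indicator_one_eq h₁ h₂, Measure.restrict_apply' h₁, Measure.restrict_apply' h₂,
    ← hpres.measure_preimage_equiv (S₂ ∩ M₂)]
  exact (measure_mono hsub).trans (measure_union_le _ _)

theorem lintegral_conv2R_indicator_one_mul (h₁ : MeasurableSet M₁) (h₂ : MeasurableSet M₂)
    {h : ℝ → ℝ≥0∞} (hh : Measurable h) :
    ∫⁻ x, conv2R (M₁.indicator 1) (M₂.indicator 1) x * h x =
      ∫⁻ p, h (p.1 + p.2) ∂(volume.restrict M₁).prod (volume.restrict M₂) := by
  rw [lintegral_conv2R_mul (measurable_one.indicator h₁) (measurable_one.indicator h₂) hh,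
    withDensity_indicator_one h₁, withDensity_indicator_one h₂]

theorem ae_conv2R_indicator_one_ne_zero (h₁ : MeasurableSet M₁) (h₂ : MeasurableSet M₂) :
    ∀ᵐ p ∂(volume.restrict M₁).prod (volume.restrict M₂),
      conv2R (M₁.indicator 1) (M₂.indicator 1) (p.1 + p.2) ≠ 0 := by
  have hN : MeasurableSet {x | conv2R (M₁.indicator 1) (M₂.indicator 1) x = 0} :=
    measurable_conv2R (measurable_one.indicator h₁) (measurable_one.indicator h₂)
      (measurableSet_singleton 0)
  have h := lintegral_conv2R_indicator_one_mul h₁ h₂ (measurable_one.indicator hN)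
  set K := conv2R (M₁.indicator 1) (M₂.indicator 1)
  have hzero : ∀ x, K x * {x | K x = 0}.indicator 1 x = 0 := fun x => by
    by_cases hx : K x = 0 <;> simp [hx]
  rw [lintegral_congr hzero, lintegral_zero, eq_comm] at h
  filter_upwards [(lintegral_eq_zero_iff ((measurable_one.indicator hN).comp measurable_add)).1 h]
    with p hp
  simpa using hp

theorem toReal_conv2R_indicator_one_le (h₁ : MeasurableSet M₁) (h₂ : MeasurableSet M₂)
    (hfin₁ : volume M₁ ≠ ⊤) (hfin₂ : volume M₂ ≠ ⊤) (y z : ℝ) :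
    (conv2R (M₁.indicator 1) (M₂.indicator 1) (y + z)).toReal ≤
      min ((volume.restrict M₁).real (Iic y) + (volume.restrict M₂).real (Iic z))
        ((volume.real M₁ - (volume.restrict M₁).real (Iic y)) +
          (volume.real M₂ - (volume.restrict M₂).real (Iic z))) := by
  have : IsFiniteMeasure (volume.restrict M₁) := isFiniteMeasure_restrict.2 hfin₁
  have : IsFiniteMeasure (volume.restrict M₂) := isFiniteMeasure_restrict.2 hfin₂
  refine le_min (ENNReal.toReal_le_add (conv2R_indicator_one_add_le h₁ h₂ fun w hw => ?_)
    (measure_ne_top _ _) (measure_ne_top _ _)) ?_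
  · simp only [mem_Iic, not_le] at hw ⊢
    linarith
  rw [← measureReal_restrict_apply_univ (μ := volume) M₁,
    ← measureReal_restrict_apply_univ (μ := volume) M₂, measureReal_univ_sub_measureReal_Iic,
    measureReal_univ_sub_measureReal_Iic,
    measureReal_congr (Ioi_ae_eq_Ici (μ := volume.restrict M₁))]
  refine ENNReal.toReal_le_add (conv2R_indicator_one_add_le h₁ h₂ fun w hw => ?_)
    (measure_ne_top _ _) (measure_ne_top _ _)
  simp only [mem_Ici, not_le, mem_Ioi] at hw ⊢
  linarith

end Indicators

theorem ofReal_sq_div_two_le_lintegral_conv2R_indicator_one {M₁ M₂ : Set ℝ}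
    (h₁ : MeasurableSet M₁) (h₂ : MeasurableSet M₂) (h0 : volume M₁ ≠ 0)
    (h12 : volume M₁ ≤ volume M₂) (hfin : volume M₂ ≠ ⊤) :
    ENNReal.ofReal (volume.real M₁ ^ 2 / 2) ≤
      ∫⁻ x, conv2R (M₁.indicator 1) (M₂.indicator 1) x *
        ENNReal.ofReal (Real.log (volume.real M₁ /
          (conv2R (M₁.indicator 1) (M₂.indicator 1) x).toReal)) := by
  have hfin₁ : volume M₁ ≠ ⊤ := ne_top_of_le_ne_top hfin h12
  set K := conv2R (M₁.indicator 1) (M₂.indicator 1)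
  set a := volume.real M₁
  set b := volume.real M₂
  set G₁ := fun y => (volume.restrict M₁).real (Iic y)
  set G₂ := fun z => (volume.restrict M₂).real (Iic z)
  have ha : 0 < a := ENNReal.toReal_pos h0 hfin₁
  have hab : a ≤ b := ENNReal.toReal_mono hfin h12
  have hK : Measurable K :=
    measurable_conv2R (measurable_one.indicator h₁) (measurable_one.indicator h₂)
  rw [lintegral_conv2R_indicator_one_mul h₁ h₂ (by fun_prop)]
  calc ENNReal.ofReal (a ^ 2 / 2)
      = ∫⁻ q, (ENNReal.ofReal (Real.log (a / (q.1 + q.2))) +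
          ENNReal.ofReal (Real.log (a / ((a - q.1) + (b - q.2)))))
          ∂(volume.restrict (Ioc 0 a)).prod (volume.restrict (Ioc 0 b)) :=
        (lintegral_Ioc_prod_Ioc_ofReal_log_div_corners ha hab).symm
    _ = ∫⁻ p, (ENNReal.ofReal (Real.log (a / (G₁ p.1 + G₂ p.2))) +
          ENNReal.ofReal (Real.log (a / ((a - G₁ p.1) + (b - G₂ p.2)))))
          ∂(volume.restrict M₁).prod (volume.restrict M₂) :=
        (lintegral_prod_restrict_comp_measureReal_Iic hfin₁ hfin (by fun_prop)).symm
    _ ≤ ∫⁻ p, ENNReal.ofReal (Real.log (a / (K (p.1 + p.2)).toReal))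
          ∂(volume.restrict M₁).prod (volume.restrict M₂) := by
        refine lintegral_mono_ae ?_
        filter_upwards [ae_conv2R_indicator_one_ne_zero h₁ h₂] with p hp
        have hk := toReal_conv2R_indicator_one_le h₁ h₂ hfin₁ hfin p.1 p.2
        exact ofReal_log_div_add_ofReal_log_div_le ha
          (ENNReal.toReal_pos hp ((conv2R_indicator_one_le h₁ h₂ _).trans_lt hfin₁.lt_top).ne)
          (le_min_iff.1 hk).1 (le_min_iff.1 hk).2 (by linarith)

section UniformSum

variable {M₁ M₂ : Set ℝ}

theorem conv2R_unifDens (h₁ : MeasurableSet M₁) (h₂ : MeasurableSet M₂) (x : ℝ) :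
    conv2R (unifDens M₁) (unifDens M₂) x =
      (volume M₁)⁻¹ * (volume M₂)⁻¹ * conv2R (M₁.indicator 1) (M₂.indicator 1) x :=
  conv2R_const_mul (measurable_one.indicator h₁) (measurable_one.indicator h₂) _ _ x

theorem measurable_unifDens (h₁ : MeasurableSet M₁) : Measurable (unifDens M₁) :=
  (measurable_one.indicator h₁).const_mul _

theorem lintegral_unifDens (h₁ : MeasurableSet M₁) (h0 : volume M₁ ≠ 0) (hfin : volume M₁ ≠ ⊤) :
    ∫⁻ x, unifDens M₁ x = 1 := by
  unfold unifDens
  rw [lintegral_const_mul _ (measurable_one.indicator h₁), lintegral_indicator_one h₁,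
    ENNReal.inv_mul_cancel h0 hfin]

theorem toReal_conv2R_unifDens_le (h₁ : MeasurableSet M₁) (h₂ : MeasurableSet M₂)
    (h0 : volume M₁ ≠ 0) (hfin : volume M₁ ≠ ⊤) (h0₂ : volume M₂ ≠ 0) (x : ℝ) :
    (conv2R (unifDens M₁) (unifDens M₂) x).toReal ≤ (volume.real M₂)⁻¹ := by
  rw [measureReal_def, ← ENNReal.toReal_inv]
  refine ENNReal.toReal_mono (ENNReal.inv_ne_top.2 h0₂) ?_
  calc conv2R (unifDens M₁) (unifDens M₂) x
      ≤ (volume M₁)⁻¹ * (volume M₂)⁻¹ * volume M₁ := by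
        rw [conv2R_unifDens h₁ h₂]
        gcongr
        exact conv2R_indicator_one_le h₁ h₂ x
    _ = (volume M₂)⁻¹ := by rw [mul_right_comm, ENNReal.inv_mul_cancel h0 hfin, one_mul]

theorem ofReal_le_lintegral_conv2R_unifDens (h₁ : MeasurableSet M₁) (h₂ : MeasurableSet M₂)
    (h0 : volume M₁ ≠ 0) (h12 : volume M₁ ≤ volume M₂) (hfin : volume M₂ ≠ ⊤) :
    ENNReal.ofReal (volume.real M₁ / (2 * volume.real M₂)) ≤
      ∫⁻ x, ENNReal.ofReal ((conv2R (unifDens M₁) (unifDens M₂) x).toReal *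
        Real.log ((volume.real M₂)⁻¹ / (conv2R (unifDens M₁) (unifDens M₂) x).toReal)) := by
  have hfin₁ : volume M₁ ≠ ⊤ := ne_top_of_le_ne_top hfin h12
  set K := conv2R (M₁.indicator 1) (M₂.indicator 1)
  set a := volume.real M₁
  set b := volume.real M₂
  have ha : 0 < a := ENNReal.toReal_pos h0 hfin₁
  have hb : 0 < b := ha.trans_le (ENNReal.toReal_mono hfin h12)
  have hK : ∀ x, K x ≠ ⊤ := fun x =>
    ne_top_of_le_ne_top hfin₁ (conv2R_indicator_one_le h₁ h₂ x)
  have hpt : ∀ x, ENNReal.ofReal ((conv2R (unifDens M₁) (unifDens M₂) x).toReal *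
      Real.log (b⁻¹ / (conv2R (unifDens M₁) (unifDens M₂) x).toReal)) =
      ENNReal.ofReal (a * b)⁻¹ * (K x * ENNReal.ofReal (Real.log (a / (K x).toReal))) := by
    intro x
    rw [conv2R_unifDens h₁ h₂, ENNReal.toReal_mul, ENNReal.toReal_mul, ENNReal.toReal_inv,
      ENNReal.toReal_inv]
    change ENNReal.ofReal (a⁻¹ * b⁻¹ * (K x).toReal *
      Real.log (b⁻¹ / (a⁻¹ * b⁻¹ * (K x).toReal))) = _
    have harg : b⁻¹ / (a⁻¹ * b⁻¹ * (K x).toReal) = a / (K x).toReal := by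
      rcases eq_or_ne (K x).toReal 0 with hk | hk
      · simp [hk]
      · field_simp
    rw [harg, mul_assoc, ← mul_inv, ENNReal.ofReal_mul (by positivity),
      ENNReal.ofReal_mul ENNReal.toReal_nonneg, ENNReal.ofReal_toReal (hK x)]
  rw [lintegral_congr hpt, lintegral_const_mul' _ _ ENNReal.ofReal_ne_top]
  calc ENNReal.ofReal (a / (2 * b))
        = ENNReal.ofReal (a * b)⁻¹ * ENNReal.ofReal (a ^ 2 / 2) := by
        rw [← ENNReal.ofReal_mul (by positivity)]
        congr 1
        field_simp
    _ ≤ _ := by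
        gcongr
        exact ofReal_sq_div_two_le_lintegral_conv2R_indicator_one h₁ h₂ h0 h12 hfin

end UniformSum

/-- For independent `X`, `Y` uniform on Borel sets `M₁`, `M₂ ⊆ ℝ` with
`0 < |M₁| < |M₂| < ∞`:
`h(X + Y) ≥ log |M₂| + |M₁|/(2|M₂|) ≥ log(|M₂| + |M₁|/2)`. -/
theorem entropy_sum_uniforms (M₁ M₂ : Set ℝ)
    (h₁ : MeasurableSet M₁) (h₂ : MeasurableSet M₂)
    (h0 : 0 < volume M₁) (h12 : volume M₁ < volume M₂) (hfin : volume M₂ < ⊤) :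
    (((Real.log (volume M₂).toReal +
        (volume M₁).toReal / (2 * (volume M₂).toReal)) : ℝ) : EReal) ≤
      entropyR (conv2R (unifDens M₁) (unifDens M₂)) ∧
    Real.log ((volume M₂).toReal + (volume M₁).toReal / 2) ≤
      Real.log (volume M₂).toReal + (volume M₁).toReal / (2 * (volume M₂).toReal) := by
  have hfin₁ : volume M₁ ≠ ⊤ := (h12.trans hfin).ne
  have hb : 0 < volume.real M₂ := ENNReal.toReal_pos (h0.trans h12).ne' hfin.ne
  constructor
  · refine le_entropyR_of_le_inv hb
      (measurable_conv2R (measurable_unifDens h₁) (measurable_unifDens h₂)) ?_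
      (toReal_conv2R_unifDens_le h₁ h₂ h0.ne' hfin₁ (h0.trans h12).ne')
      (ofReal_le_lintegral_conv2R_unifDens h₁ h₂ h0.ne' h12.le hfin.ne)
    rw [lintegral_conv2R (measurable_unifDens h₁) (measurable_unifDens h₂),
      lintegral_unifDens h₁ h0.ne' hfin₁, lintegral_unifDens h₂ (h0.trans h12).ne' hfin.ne,
      one_mul]
  · rw [← div_div]
    exact Real.log_add_le_log_add_div hb (by positivity)
end
end
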